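/- arXiv:2404.12998 — 11 statements merged into one kernel-verified Lean document; each statement's English description precedes it below -/
import Mathlib

section
/- Let L be a Lie algebra over a field 𝔽 and let α be a commuting automorphism of L. Then ⁅α(x) − x, ⁅y, z⁆⁆ = ⁅α(y) − y, ⁅x, z⁆⁆ for all x, y, z ∈ L. -/
/-- For a commuting automorphism `α` of a Lie algebra `L` over a field `𝔽`, one has
`⁅α x − x, ⁅y, z⁆⁆ = ⁅α y − y, ⁅x, z⁆⁆` for all `x, y, z ∈ L`. -/
theorem commuting_aut_diff_bracket_symm {F L : Type*} [Field F] [LieRing L] [LieAlgebra F L]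
    (α : L ≃ₗ⁅F⁆ L) (hα : ∀ x : L, ⁅α x, x⁆ = 0) :
    ∀ x y z : L, ⁅α x - x, ⁅y, z⁆⁆ = ⁅α y - y, ⁅x, z⁆⁆ := by
  -- Polarization of the commuting condition
  have P1 : ∀ u v : L, ⁅α u, v⁆ = ⁅u, α v⁆ := by
    intro u v
    have h := hα (u + v)
    have hadd : α (u + v) = α u + α v := α.toLieHom.map_add u v
    rw [hadd] at h
    simp only [add_lie, lie_add, hα u, hα v, zero_add, add_zero] at h
    -- h : ⁅α u, v⁆ + ⁅α v, u⁆ = 0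
    rw [← lie_skew u (α v)]
    exact eq_neg_of_add_eq_zero_right h
  -- move `β := α - 1` across a bracket
  have Pβ : ∀ u v : L, ⁅α u - u, v⁆ = ⁅u, α v - v⁆ := by
    intro u v
    rw [sub_lie, lie_sub, P1]
  -- `β⁅u,v⁆ = ⁅u, f v⁆` where `f v = α (α v) - v`
  have Q : ∀ u v : L, α ⁅u, v⁆ - ⁅u, v⁆ = ⁅u, α (α v) - v⁆ := by
    intro u v
    rw [lie_sub, LieEquiv.map_lie, P1]
  -- Reduction 1 : S - T = ⁅⁅x,y⁆, f z⁆
  have K1 : ∀ x y z : L, ⁅α x - x, ⁅y, z⁆⁆ - ⁅α y - y, ⁅x, z⁆⁆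
      = ⁅⁅x, y⁆, α (α z) - z⁆ := by
    intro x y z
    have hx : ⁅α x - x, ⁅y, z⁆⁆ = ⁅x, ⁅y, α (α z) - z⁆⁆ := by
      rw [Pβ x ⁅y, z⁆, Q y z]
    have hy : ⁅α y - y, ⁅x, z⁆⁆ = ⁅y, ⁅x, α (α z) - z⁆⁆ := by
      rw [Pβ y ⁅x, z⁆, Q x z]
    rw [hx, hy, ← lie_lie]
  -- Reduction 2 : S - T = -⁅⁅βx, βy⁆, z⁆
  have K2 : ∀ x y z : L, ⁅α x - x, ⁅y, z⁆⁆ - ⁅α y - y, ⁅x, z⁆⁆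
      = -⁅⁅α x - x, α y - y⁆, z⁆ := by
    intro x y z
    have e1 : ⁅α x - x, ⁅y, z⁆⁆ = ⁅⁅α x - x, y⁆, z⁆ + ⁅y, ⁅x, α z - z⁆⁆ := by
      rw [leibniz_lie, Pβ x z]
    have e2 : ⁅α y - y, ⁅x, z⁆⁆ = -⁅⁅α x - x, y⁆, z⁆ + ⁅x, ⁅y, α z - z⁆⁆ := by
      rw [leibniz_lie, Pβ y z]
      have h3 : ⁅α y - y, x⁆ = -⁅α x - x, y⁆ := by
        rw [Pβ y x, ← lie_skew]
      rw [h3, neg_lie]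
    -- ⁅⁅x,y⁆, βz⁆ = ⁅⁅βx, βy⁆, z⁆ + 2⁅⁅βx, y⁆, z⁆
    have e4 : ⁅⁅x, y⁆, α z - z⁆
        = ⁅⁅α x - x, α y - y⁆, z⁆ + (⁅⁅α x - x, y⁆, z⁆ + ⁅⁅α x - x, y⁆, z⁆) := by
      rw [← Pβ ⁅x, y⁆ z]
      have h5 : α ⁅x, y⁆ - ⁅x, y⁆
          = ⁅α x - x, α y - y⁆ + (⁅α x - x, y⁆ + ⁅α x - x, y⁆) := by
        rw [LieEquiv.map_lie]
        have h6 : ⁅x, α y⁆ = ⁅α x, y⁆ := (P1 x y).symm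
        simp only [sub_lie, lie_sub, h6]
        abel
      rw [h5, add_lie, add_lie]
    have e3 : ⁅x, ⁅y, α z - z⁆⁆ - ⁅y, ⁅x, α z - z⁆⁆ = ⁅⁅x, y⁆, α z - z⁆ :=
      (lie_lie x y (α z - z)).symm
    rw [e1, e2]
    have : ⁅⁅α x - x, y⁆, z⁆ + ⁅y, ⁅x, α z - z⁆⁆ -
        (-⁅⁅α x - x, y⁆, z⁆ + ⁅x, ⁅y, α z - z⁆⁆)
        = (⁅⁅α x - x, y⁆, z⁆ + ⁅⁅α x - x, y⁆, z⁆) -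
          (⁅x, ⁅y, α z - z⁆⁆ - ⁅y, ⁅x, α z - z⁆⁆) := by abel
    rw [this, e3, e4]
    abel
  -- ⁅⁅βx, βy⁆, z⁆ = ⁅⁅x,y⁆, f (β z)⁆
  have Ka : ∀ x y z : L, ⁅⁅α x - x, α y - y⁆, z⁆
      = ⁅⁅x, y⁆, α (α (α z - z)) - (α z - z)⁆ := by
    intro x y z
    rw [lie_lie]
    have h1 : ⁅α x - x, ⁅α y - y, z⁆⁆ = ⁅x, ⁅y, α (α (α z - z)) - (α z - z)⁆⁆ := by
      rw [Pβ y z, Pβ x ⁅y, α z - z⁆, Q y (α z - z)]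
    have h2 : ⁅α y - y, ⁅α x - x, z⁆⁆ = ⁅y, ⁅x, α (α (α z - z)) - (α z - z)⁆⁆ := by
      rw [Pβ x z, Pβ y ⁅x, α z - z⁆, Q x (α z - z)]
    rw [h1, h2, ← lie_lie]
  -- Combine: ⁅⁅x,y⁆, f (α z)⁆ = 0
  have V : ∀ x y z : L, ⁅⁅x, y⁆, α (α (α z)) - α z⁆ = 0 := by
    intro x y z
    have h := (K1 x y z).symm.trans (K2 x y z)
    rw [Ka x y z] at h
    -- h : ⁅⁅x,y⁆, f z⁆ = -⁅⁅x,y⁆, f (β z)⁆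
    have h' : ⁅⁅x, y⁆, (α (α z) - z) + (α (α (α z - z)) - (α z - z))⁆ = 0 := by
      rw [lie_add, h]
      abel
    have harg : (α (α z) - z) + (α (α (α z - z)) - (α z - z))
        = α (α (α z)) - α z := by
      have hsub : ∀ a b : L, α (a - b) = α a - α b := fun a b =>
        α.toLieHom.map_sub a b
      rw [hsub, hsub]
      abel
    rwa [harg] at h'
  intro x y z
  have hV := V x y (α.symm z)
  rw [LieEquiv.apply_symm_apply] at hV
  have := K1 x y z
  rw [hV] at this
  exact sub_eq_zero.mp this
end

section
/- Let L be a Lie algebra over a field 𝔽 and let α be a commuting automorphism of L. Then ⁅y, ⁅y, α(x) − x⁆⁆ = 0 for all x, y ∈ L. -/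
/-- For a commuting automorphism `α` of a Lie algebra `L` over a field `𝔽`, one has
`⁅y, ⁅y, α x − x⁆⁆ = 0` for all `x, y ∈ L`. -/
theorem commuting_aut_double_bracket_eq_zero {F L : Type*} [Field F] [LieRing L] [LieAlgebra F L]
    (α : L ≃ₗ⁅F⁆ L) (hα : ∀ x : L, ⁅α x, x⁆ = 0) :
    ∀ x y : L, ⁅y, ⁅y, α x - x⁆⁆ = 0 := by
  -- Polarization of the commuting condition
  have hrel : ∀ a b : L, ⁅α a, b⁆ = ⁅a, α b⁆ := by
    intro a b
    have h : ⁅α a + α b, a + b⁆ = 0 := by have := hα (a + b); rwa [show α (a + b) = α a + α b from α.toLinearEquiv.map_add a b] at this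
    simp only [add_lie, lie_add, hα a, hα b, zero_add, add_zero] at h
    rw [eq_neg_of_add_eq_zero_right h, lie_skew]
  intro x y
  rw [lie_sub, lie_sub, sub_eq_zero]
  calc ⁅y, ⁅y, α x⁆⁆ = ⁅y, ⁅α y, x⁆⁆ := by rw [hrel]
    _ = ⁅y, α ⁅y, α.symm x⁆⁆ := by rw [LieEquiv.map_lie, α.apply_symm_apply]
    _ = ⁅α y, ⁅y, α.symm x⁆⁆ := (hrel _ _).symm
    _ = ⁅y, ⁅α y, α.symm x⁆⁆ := by rw [leibniz_lie, hα, zero_lie, zero_add]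
    _ = ⁅y, ⁅y, x⁆⁆ := by rw [hrel, α.apply_symm_apply]
end

section
/- Let L be a Lie algebra over a field 𝔽 and let α be a commuting automorphism of L. Then ⁅α(x) − x, ⁅y, z⁆⁆ = 2·⁅z, ⁅y, α(x) − x⁆⁆ for all x, y, z ∈ L. -/
/-- For a commuting automorphism `α` of a Lie algebra `L` over a field `𝔽`, one has
`⁅α x − x, ⁅y, z⁆⁆ = 2•⁅z, ⁅y, α x − x⁆⁆` for all `x, y, z ∈ L`. -/
theorem commuting_aut_diff_bracket_eq_two_smul {F L : Type*} [Field F] [LieRing L]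
    [LieAlgebra F L] (α : L ≃ₗ⁅F⁆ L) (hα : ∀ x : L, ⁅α x, x⁆ = 0) :
    ∀ x y z : L, ⁅α x - x, ⁅y, z⁆⁆ = 2 • ⁅z, ⁅y, α x - x⁆⁆ := by
  -- Linearization of the commuting condition: ⁅α u, v⁆ = ⁅u, α v⁆.
  have hA : ∀ u v : L, ⁅α u, v⁆ = ⁅u, α v⁆ := by
    intro u v
    have h := hα (u + v)
    have hadd : α (u + v) = α u + α v := α.toLieHom.map_add u v
    rw [hadd, add_lie, lie_add, lie_add, hα u, hα v, zero_add, add_zero] at h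
    rw [eq_neg_of_add_eq_zero_left h, lie_skew]
  have hB : ∀ u v : L, α ⁅u, v⁆ = ⁅α u, α v⁆ := fun u v => α.map_lie u v
  -- auxiliary: pushing α through twice
  have key : ∀ a b : L, α ⁅α a, b⁆ = ⁅a, α (α (α b))⁆ := by
    intro a b
    rw [hB, hA, hA]
  -- Key fact: α² fixes brackets from the right: ⁅⁅y,z⁆, α (α w)⁆ = ⁅⁅y,z⁆, w⁆.
  have hK : ∀ w y z : L, ⁅⁅y, z⁆, α (α w)⁆ = ⁅⁅y, z⁆, w⁆ := by
    have h3 : ∀ x y z : L, ⁅⁅y, z⁆, α x⁆ = ⁅⁅y, z⁆, α (α (α x))⁆ := by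
      intro x y z
      calc ⁅⁅y, z⁆, α x⁆ = ⁅α ⁅y, z⁆, x⁆ := (hA _ _).symm
        _ = ⁅⁅α y, α z⁆, x⁆ := by rw [hB]
        _ = ⁅α y, ⁅α z, x⁆⁆ - ⁅α z, ⁅α y, x⁆⁆ := lie_lie _ _ _
        _ = ⁅y, α ⁅α z, x⁆⁆ - ⁅z, α ⁅α y, x⁆⁆ := by
              rw [hA y ⁅α z, x⁆, hA z ⁅α y, x⁆]
        _ = ⁅y, ⁅z, α (α (α x))⁆⁆ - ⁅z, ⁅y, α (α (α x))⁆⁆ := by rw [key, key]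
        _ = ⁅⁅y, z⁆, α (α (α x))⁆ := (lie_lie _ _ _).symm
    intro w y z
    have h := h3 (α.symm w) y z
    rw [α.apply_symm_apply] at h
    exact h.symm
  -- Hence (α² - 1) w centralizes all brackets.
  have hcent : ∀ w y z : L, ⁅⁅y, z⁆, α (α w) - w⁆ = 0 := by
    intro w y z
    rw [lie_sub, hK, sub_self]
  -- Key lemma: ⁅⁅α x - x, y⁆, y⁆ = 0.
  have hD : ∀ x y : L, ⁅⁅α x - x, y⁆, y⁆ = 0 := by
    intro x y
    have s1 : ⁅α x - x, y⁆ = ⁅x, α y - y⁆ := by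
      rw [sub_lie, lie_sub, hA]
    have s2 : ⁅α y - y, y⁆ = 0 := by rw [sub_lie, hα, lie_self, sub_self]
    have s3 : ⁅⁅α x - x, y⁆, y⁆ = -⁅α y - y, ⁅x, y⁆⁆ := by
      rw [s1, lie_lie, s2, lie_zero, zero_sub]
    have s4 : ⁅α y - y, ⁅x, y⁆⁆ = ⁅y, ⁅x, α (α y) - y⁆⁆ := by
      rw [sub_lie, hA, hB, hA, ← lie_sub, ← lie_sub]
    rw [s3, s4]
    rw [leibniz_lie, hcent, zero_add]
    have s5 : ⁅y, α (α y) - y⁆ = 0 := by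
      rw [lie_sub, lie_self, sub_zero, ← hA, lie_self]
    rw [s5, lie_zero, neg_zero]
  -- Symmetrized form: ⁅z, ⁅y, βx⁆⁆ + ⁅y, ⁅z, βx⁆⁆ = 0.
  have hN : ∀ x y z : L, ⁅z, ⁅y, α x - x⁆⁆ + ⁅y, ⁅z, α x - x⁆⁆ = 0 := by
    intro x y z
    have hD' : ∀ v : L, ⁅v, ⁅v, α x - x⁆⁆ = 0 := by
      intro v
      rw [← lie_skew v (α x - x), lie_neg, ← lie_skew v ⁅α x - x, v⁆, neg_neg, hD]
    have h := hD' (y + z)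
    simp only [add_lie, lie_add] at h
    rw [hD' y, hD' z] at h
    rw [← h]
    abel
  intro x y z
  have j : ⁅α x - x, ⁅y, z⁆⁆ = ⁅z, ⁅y, α x - x⁆⁆ - ⁅y, ⁅z, α x - x⁆⁆ := by
    rw [leibniz_lie, ← lie_skew ⁅α x - x, y⁆ z, ← lie_skew (α x - x) y,
      ← lie_skew (α x - x) z, lie_neg, lie_neg, neg_neg]
    abel
  have hn := hN x y z
  have h2 : ⁅y, ⁅z, α x - x⁆⁆ = -⁅z, ⁅y, α x - x⁆⁆ :=
    eq_neg_of_add_eq_zero_right hn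
  rw [j, h2, two_smul]
  abel
end

section
/- Let L be a Lie algebra over a field 𝔽 and let α be a commuting automorphism of L. Then ⁅α(x) − x, ⁅y, z⁆⁆ = 0 for all x, y, z ∈ L. -/
/-!
Polarizing `⁅α x, x⁆ = 0` gives `⁅α a, b⁆ = ⁅a, α b⁆`, hence `α ⁅a, b⁆ = ⁅a, α² b⁆`; comparing
two expansions of `α ⁅a, ⁅b, c⁆⁆` (and using that `α` is onto) shows that `α² - 1` maps `L` into
the centralizer of `⁅L, L⁆`. With `D = α - 1`, the trilinear map `⁅D a, ⁅b, c⁆⁆` is then symmetric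
in `a, b` and skew in `b, c`, so it is killed by `2`. For characteristic `2`, the same facts give
`⁅D a, ⁅D b, c⁆⁆ = 0`, and expanding `D ⁅y, z⁆ = ⁅D y, D z⁆ + ⁅D y, z⁆ + ⁅y, D z⁆` yields
`⁅D x, ⁅y, z⁆⁆ = 2 • ⁅x, ⁅y, D z⁆⁆`.
-/

def IsCommutingMap {L : Type*} [LieRing L] (f : L → L) : Prop := ∀ x, ⁅f x, x⁆ = 0

theorem LieHom.map_lie_sub_lie {R L : Type*} [CommRing R] [LieRing L] [LieAlgebra R L]
    (f : L →ₗ⁅R⁆ L) (y z : L) :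
    f ⁅y, z⁆ - ⁅y, z⁆ = ⁅f y - y, f z - z⁆ + (⁅f y - y, z⁆ + ⁅y, f z - z⁆) := by
  rw [LieHom.map_lie]
  simp only [sub_lie, lie_sub]
  abel

namespace IsCommutingMap

theorem lie_apply_comm {L F : Type*} [LieRing L] [FunLike F L L] [AddHomClass F L L] {f : F}
    (hf : IsCommutingMap f) (a b : L) : ⁅f a, b⁆ = ⁅a, f b⁆ := by
  have h := hf (a + b)
  rw [map_add, add_lie, lie_add, lie_add, hf a, hf b, zero_add, add_zero] at h
  rw [eq_neg_of_add_eq_zero_left h, lie_skew]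

variable {R L : Type*} [CommRing R] [LieRing L] [LieAlgebra R L] {f : L →ₗ⁅R⁆ L}

theorem lie_sub_self_comm (hf : IsCommutingMap f) (a b : L) : ⁅f a - a, b⁆ = ⁅a, f b - b⁆ := by
  rw [sub_lie, lie_sub, hf.lie_apply_comm]

theorem map_lie_eq_lie_apply_apply (hf : IsCommutingMap f) (a b : L) :
    f ⁅a, b⁆ = ⁅a, f (f b)⁆ := by
  rw [LieHom.map_lie, hf.lie_apply_comm]

theorem lie_apply_apply_sub_self (hf : IsCommutingMap f) (a b : L) :
    ⁅a, f (f b) - b⁆ = f ⁅a, b⁆ - ⁅a, b⁆ := by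
  rw [lie_sub, hf.map_lie_eq_lie_apply_apply]

theorem lie_sub_self_lie_lie (hf : IsCommutingMap f) (a b c : L) :
    ⁅f a - a, ⁅b, c⁆⁆ = ⁅a, ⁅b, f (f c) - c⁆⁆ := by
  rw [hf.lie_sub_self_comm, hf.lie_apply_apply_sub_self]

theorem lie_lie_apply_four_eq_lie_lie_apply_two (hf : IsCommutingMap f) (a b c : L) :
    ⁅⁅a, b⁆, f (f (f (f c)))⁆ = ⁅⁅a, b⁆, f (f c)⁆ := by
  have h₁ : f ⁅a, ⁅b, c⁆⁆ = ⁅a, ⁅b, f (f (f (f c)))⁆⁆ := by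
    rw [hf.map_lie_eq_lie_apply_apply a, hf.map_lie_eq_lie_apply_apply b,
      hf.map_lie_eq_lie_apply_apply b]
  have h₂ : f ⁅a, ⁅b, c⁆⁆ = ⁅⁅a, b⁆, f (f c)⁆ + ⁅b, ⁅a, f (f (f (f c)))⁆⁆ := by
    rw [leibniz_lie a b c, map_add, hf.map_lie_eq_lie_apply_apply ⁅a, b⁆,
      hf.map_lie_eq_lie_apply_apply b, hf.map_lie_eq_lie_apply_apply a,
      hf.map_lie_eq_lie_apply_apply a]
  rw [← add_left_inj ⁅b, ⁅a, f (f (f (f c)))⁆⁆, ← leibniz_lie, ← h₁, h₂]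

theorem lie_lie_apply_apply_sub_self_eq_zero (hf : IsCommutingMap f)
    (hsurj : Function.Surjective f) (a b c : L) : ⁅⁅a, b⁆, f (f c) - c⁆ = 0 := by
  obtain ⟨c, rfl⟩ := hsurj.comp hsurj c
  rw [lie_sub, Function.comp_apply, hf.lie_lie_apply_four_eq_lie_lie_apply_two, sub_self]

theorem lie_sub_self_lie_lie_comm (hf : IsCommutingMap f) (hsurj : Function.Surjective f)
    (a b c : L) : ⁅f a - a, ⁅b, c⁆⁆ = ⁅f b - b, ⁅a, c⁆⁆ := by
  rw [← sub_eq_zero, hf.lie_sub_self_lie_lie, hf.lie_sub_self_lie_lie, ← lie_lie,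
    hf.lie_lie_apply_apply_sub_self_eq_zero hsurj]

theorem two_smul_lie_sub_self_lie_lie_eq_zero (hf : IsCommutingMap f)
    (hsurj : Function.Surjective f) (x y z : L) : (2 : R) • ⁅f x - x, ⁅y, z⁆⁆ = 0 := by
  have comm := hf.lie_sub_self_lie_lie_comm hsurj
  have skew : ∀ a b c : L, ⁅f a - a, ⁅b, c⁆⁆ = -⁅f a - a, ⁅c, b⁆⁆ := fun a b c ↦ by
    rw [← lie_neg, lie_skew]
  -- Symmetric in the first two slots and skew in the last two: cycling through all six
  -- permutations of `x, y, z` flips the sign.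
  have : ⁅f x - x, ⁅y, z⁆⁆ = -⁅f x - x, ⁅y, z⁆⁆ :=
    calc ⁅f x - x, ⁅y, z⁆⁆
      _ = ⁅f y - y, ⁅x, z⁆⁆ := comm x y z
      _ = -⁅f y - y, ⁅z, x⁆⁆ := skew y x z
      _ = -⁅f z - z, ⁅y, x⁆⁆ := by rw [comm]
      _ = ⁅f z - z, ⁅x, y⁆⁆ := by rw [skew z y x, neg_neg]
      _ = ⁅f x - x, ⁅z, y⁆⁆ := comm z x y
      _ = -⁅f x - x, ⁅y, z⁆⁆ := skew x z y
  rw [two_smul]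
  exact eq_neg_iff_add_eq_zero.mp this

theorem lie_lie_sub_self_apply_apply_sub_self_eq_zero (hf : IsCommutingMap f)
    (hsurj : Function.Surjective f) (a b c : L) : ⁅a, ⁅f b - b, f (f c) - c⁆⁆ = 0 := by
  rw [leibniz_lie, hf.lie_lie_apply_apply_sub_self_eq_zero hsurj, zero_add,
    hf.lie_apply_apply_sub_self, ← hf.lie_sub_self_comm]
  have : f (f b - b) - (f b - b) = (f (f b) - b) - ((f b - b) + (f b - b)) := by
    rw [map_sub]; abel
  rw [this, sub_lie, add_lie, ← two_smul R, ← lie_skew,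
    hf.lie_lie_apply_apply_sub_self_eq_zero hsurj, hf.two_smul_lie_sub_self_lie_lie_eq_zero hsurj,
    neg_zero, sub_zero]

theorem lie_sub_self_lie_lie_sub_self_eq_zero (hf : IsCommutingMap f)
    (hsurj : Function.Surjective f) (a b c : L) : ⁅f a - a, ⁅f b - b, c⁆⁆ = 0 := by
  rw [hf.lie_sub_self_lie_lie]
  exact hf.lie_lie_sub_self_apply_apply_sub_self_eq_zero hsurj a b c

theorem lie_lie_sub_self_sub_self_eq_zero (hf : IsCommutingMap f) (hsurj : Function.Surjective f)
    (x y z : L) : ⁅x, ⁅f y - y, f z - z⁆⁆ = 0 := by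
  rw [leibniz_lie, ← hf.lie_sub_self_comm x y, ← hf.lie_sub_self_comm x z,
    hf.lie_sub_self_lie_lie_sub_self_eq_zero hsurj y x z, add_zero, ← lie_skew,
    hf.lie_sub_self_lie_lie_sub_self_eq_zero hsurj z x y, neg_zero]

theorem lie_sub_self_lie_lie_eq_two_smul (hf : IsCommutingMap f) (hsurj : Function.Surjective f)
    (x y z : L) : ⁅f x - x, ⁅y, z⁆⁆ = (2 : R) • ⁅x, ⁅y, f z - z⁆⁆ := by
  rw [hf.lie_sub_self_comm, LieHom.map_lie_sub_lie, lie_add, lie_add,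
    hf.lie_lie_sub_self_sub_self_eq_zero hsurj, zero_add, hf.lie_sub_self_comm y z, two_smul]

end IsCommutingMap

/-- For a commuting automorphism `α` of a Lie algebra `L` over a field `𝔽`, one has
`⁅α x − x, ⁅y, z⁆⁆ = 0` for all `x, y, z ∈ L`. -/
theorem commuting_aut_diff_bracket_eq_zero {F L : Type*} [Field F] [LieRing L] [LieAlgebra F L]
    (α : L ≃ₗ⁅F⁆ L) (hα : ∀ x : L, ⁅α x, x⁆ = 0) :
    ∀ x y z : L, ⁅α x - x, ⁅y, z⁆⁆ = 0 := by
  intro x y z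
  have hf : IsCommutingMap (α : L →ₗ⁅F⁆ L) := hα
  change ⁅(α : L →ₗ⁅F⁆ L) x - x, ⁅y, z⁆⁆ = 0
  by_cases h2 : (2 : F) = 0
  · rw [hf.lie_sub_self_lie_lie_eq_two_smul α.surjective, h2, zero_smul]
  · exact (smul_eq_zero.mp
      (hf.two_smul_lie_sub_self_lie_lie_eq_zero α.surjective x y z)).resolve_left h2
end

section
/- Let L be a Lie algebra over a field 𝔽 of characteristic different from 2 such that Z₂(L) is abelian, i.e., ⁅a, b⁆ = 0 for all a, b ∈ Z₂(L). Then for any two commuting automorphisms α and β of L, the composite β ∘ α is a commuting automorphism of L. -/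
section CommAutAux

variable {F L : Type*} [Field F] [LieRing L] [LieAlgebra F L]

/-- Polarization of the commuting property: `⁅γ u, v⁆ = ⁅u, γ v⁆`. -/
private lemma aux_swap (γ : L ≃ₗ⁅F⁆ L) (hc : ∀ x : L, ⁅γ x, x⁆ = 0) (u v : L) :
    ⁅γ u, v⁆ = ⁅u, γ v⁆ := by
  have h := hc (u + v)
  have hadd : γ (u + v) = γ u + γ v := γ.toLieHom.map_add u v
  rw [hadd, add_lie, lie_add, lie_add, hc u, hc v, zero_add, add_zero] at h
  have h2 : ⁅γ u, v⁆ = -⁅γ v, u⁆ := eq_neg_of_add_eq_zero_left h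
  rw [h2, lie_skew]

private lemma aux_iter_swap (γ : L ≃ₗ⁅F⁆ L) (hc : ∀ x : L, ⁅γ x, x⁆ = 0) :
    ∀ (n : ℕ) (u v : L), ⁅(⇑γ)^[n] u, v⁆ = ⁅u, (⇑γ)^[n] v⁆ := by
  intro n
  induction n with
  | zero => intro u v; rfl
  | succ n ih =>
    intro u v
    rw [Function.iterate_succ_apply', aux_swap γ hc, ih, ← Function.iterate_succ_apply,
      Function.iterate_succ_apply']

private lemma aux_gamma_lie (γ : L ≃ₗ⁅F⁆ L) (hc : ∀ x : L, ⁅γ x, x⁆ = 0) (u v : L) :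
    γ ⁅u, v⁆ = ⁅γ (γ u), v⁆ := by
  rw [LieEquiv.map_lie, ← aux_swap γ hc (γ u) v]

private lemma aux_iter_shift (γ : L ≃ₗ⁅F⁆ L) (hc : ∀ x : L, ⁅γ x, x⁆ = 0) :
    ∀ (k a : ℕ) (u v : L), (⇑γ)^[k] ⁅(⇑γ)^[a] u, v⁆ = ⁅(⇑γ)^[a + 2 * k] u, v⁆ := by
  intro k
  induction k with
  | zero => intro a u v; rfl
  | succ k ih =>
    intro a u v
    rw [Function.iterate_succ_apply', ih, aux_gamma_lie γ hc]
    have h2 : γ (γ ((⇑γ)^[a + 2 * k] u)) = (⇑γ)^[a + 2 * (k + 1)] u := by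
      rw [show a + 2 * (k + 1) = a + 2 * k + 1 + 1 by ring, Function.iterate_succ_apply',
        Function.iterate_succ_apply']
    rw [h2]

/-- Move all powers of `γ` onto the first argument of a double bracket. -/
private lemma aux_mv (γ : L ≃ₗ⁅F⁆ L) (hc : ∀ x : L, ⁅γ x, x⁆ = 0) (i j k : ℕ) (u v w : L) :
    ⁅⁅(⇑γ)^[i] u, (⇑γ)^[j] v⁆, (⇑γ)^[k] w⁆ = ⁅⁅(⇑γ)^[i + j + 2 * k] u, v⁆, w⁆ := by
  have h1 : ⁅(⇑γ)^[i] u, (⇑γ)^[j] v⁆ = ⁅(⇑γ)^[i + j] u, v⁆ := by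
    rw [← aux_iter_swap γ hc j, ← Function.iterate_add_apply, Nat.add_comm j i]
  rw [h1, ← aux_iter_swap γ hc k, aux_iter_shift γ hc, Nat.add_assoc]

private lemma aux_jacobi (X Y Z : L) : ⁅⁅X, Y⁆, Z⁆ + ⁅⁅Y, Z⁆, X⁆ + ⁅⁅Z, X⁆, Y⁆ = 0 := by
  have h := lie_jacobi X Y Z
  have e1 : ⁅⁅X, Y⁆, Z⁆ = -⁅Z, ⁅X, Y⁆⁆ := by rw [← lie_skew]
  have e2 : ⁅⁅Y, Z⁆, X⁆ = -⁅X, ⁅Y, Z⁆⁆ := by rw [← lie_skew]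
  have e3 : ⁅⁅Z, X⁆, Y⁆ = -⁅Y, ⁅Z, X⁆⁆ := by rw [← lie_skew]
  rw [e1, e2, e3]
  linear_combination (norm := module) -h

/-- Jacobi identity in "normalized" form, with all `γ` powers moved to first slots. -/
private lemma aux_E (γ : L ≃ₗ⁅F⁆ L) (hc : ∀ x : L, ⁅γ x, x⁆ = 0) (a b c : ℕ) (u v w : L) :
    ⁅⁅(⇑γ)^[a + b + 2 * c] u, v⁆, w⁆ + ⁅⁅(⇑γ)^[b + c + 2 * a] v, w⁆, u⁆
      + ⁅⁅(⇑γ)^[c + a + 2 * b] w, u⁆, v⁆ = 0 := by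
  have j := aux_jacobi ((⇑γ)^[a] u) ((⇑γ)^[b] v) ((⇑γ)^[c] w)
  rw [aux_mv γ hc a b c u v w, aux_mv γ hc b c a v w u, aux_mv γ hc c a b w u v] at j
  exact j

/-- Key lemma: for a commuting automorphism `γ`, the image of `γ - 1` lies in the
second center, i.e. `⁅⁅γ u - u, v⁆, w⁆ = 0`. -/
private lemma aux_key (hchar : ringChar F ≠ 2) (γ : L ≃ₗ⁅F⁆ L)
    (hc : ∀ x : L, ⁅γ x, x⁆ = 0) (u v w : L) : ⁅⁅γ u - u, v⁆, w⁆ = 0 := by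
  have E : ∀ a b c : ℕ, ⁅⁅(⇑γ)^[a + b + 2 * c] u, v⁆, w⁆ + ⁅⁅(⇑γ)^[b + c + 2 * a] v, w⁆, u⁆
      + ⁅⁅(⇑γ)^[c + a + 2 * b] w, u⁆, v⁆ = 0 := fun a b c => aux_E γ hc a b c u v w
  -- the nine Jacobi instances (with exponents reduced by `norm_num`)
  have e1 := E 0 3 1; have e2 := E 1 3 0; have e3 := E 0 2 2
  have e4 := E 1 2 1; have e5 := E 0 1 3; have e6 := E 1 1 2
  have e7 := E 0 0 4; have e8 := E 1 0 3; have e9 := E 1 1 1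
  simp only [Nat.reduceMul, Nat.reduceAdd] at e1 e2 e3 e4 e5 e6 e7 e8 e9
  set P4 := ⁅⁅(⇑γ)^[4] u, v⁆, w⁆ with hP4
  set P5 := ⁅⁅(⇑γ)^[5] u, v⁆, w⁆ with hP5
  set Q4 := ⁅⁅(⇑γ)^[4] v, w⁆, u⁆ with hQ4
  set Q5 := ⁅⁅(⇑γ)^[5] v, w⁆, u⁆ with hQ5
  have h2 : (2 : F) ≠ 0 := Ring.two_ne_zero hchar
  have h4 : (4 : F) ≠ 0 := by
    have : (4 : F) = 2 * 2 := by norm_num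
    rw [this]; exact mul_ne_zero h2 h2
  have hQ : (4 : F) • Q4 = (4 : F) • Q5 := by
    linear_combination (norm := module) e1 + e3 + e5 + e9 - e2 - e4 - e6 - e8
  have hQ' : Q4 = Q5 := by
    have := congrArg (fun z => (4 : F)⁻¹ • z) hQ
    simpa [inv_smul_smul₀ h4] using this
  have hP : P5 = P4 := by
    linear_combination (norm := module) e1 - e2 - hQ'
  -- `P5 = γ P1`, `P4 = γ P0`
  have hs : ∀ a : ℕ, γ ⁅⁅(⇑γ)^[a] u, v⁆, w⁆ = ⁅⁅(⇑γ)^[a + 4] u, v⁆, w⁆ := by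
    intro a
    have h1 : γ ⁅⁅(⇑γ)^[a] u, v⁆, w⁆ = ⁅γ (γ ⁅(⇑γ)^[a] u, v⁆), w⁆ :=
      aux_gamma_lie γ hc _ w
    have h2' : γ (γ ⁅(⇑γ)^[a] u, v⁆) = (⇑γ)^[2] ⁅(⇑γ)^[a] u, v⁆ := rfl
    rw [h1, h2', aux_iter_shift γ hc 2 a]
  have h51 : γ ⁅⁅(⇑γ)^[1] u, v⁆, w⁆ = P5 := by rw [hs 1]
  have h40 : γ ⁅⁅(⇑γ)^[0] u, v⁆, w⁆ = P4 := by rw [hs 0]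
  have hinj : ⁅⁅(⇑γ)^[1] u, v⁆, w⁆ = ⁅⁅(⇑γ)^[0] u, v⁆, w⁆ := by
    apply EquivLike.injective γ
    rw [h51, h40, hP]
  simp only [Function.iterate_one, Function.iterate_zero, id_eq] at hinj
  rw [sub_lie, sub_lie, hinj, sub_self]

end CommAutAux

/-- Let `L` be a Lie algebra over a field `𝔽` of characteristic different from `2` such that the
second center `Z₂(L) = {x : ∀ y, ⁅x, y⁆ ∈ Z(L)}` is abelian. Then the composite of any two
commuting automorphisms of `L` is again a commuting automorphism. -/
theorem comp_commuting_of_second_center_abelian {F L : Type*} [Field F] [LieRing L]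
    [LieAlgebra F L] (hchar : ringChar F ≠ 2)
    (habelian : ∀ a b : L, (∀ y : L, ⁅a, y⁆ ∈ LieAlgebra.center F L) →
      (∀ y : L, ⁅b, y⁆ ∈ LieAlgebra.center F L) → ⁅a, b⁆ = 0)
    (α β : L ≃ₗ⁅F⁆ L) (hα : ∀ x : L, ⁅α x, x⁆ = 0) (hβ : ∀ x : L, ⁅β x, x⁆ = 0) :
    ∀ x : L, ⁅β (α x), x⁆ = 0 := by
  intro x
  rw [aux_swap β hβ (α x) x]
  have hxb : ⁅x, β x⁆ = 0 := by rw [← lie_skew, hβ, neg_zero]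
  have hx1 : ⁅α x - x, β x - x⁆ = ⁅α x, β x⁆ := by
    rw [sub_lie, lie_sub, lie_sub, hα x, hxb, lie_self, sub_zero, sub_zero, sub_zero]
  rw [← hx1]
  apply habelian
  · intro y
    rw [LieModule.mem_maxTrivSubmodule]
    intro z
    rw [← lie_skew, aux_key hchar α hα x y z, neg_zero]
  · intro y
    rw [LieModule.mem_maxTrivSubmodule]
    intro z
    rw [← lie_skew, aux_key hchar β hβ x y z, neg_zero]
end

section
/- Let L be a finite-dimensional nilpotent Lie algebra over a field 𝔽 of characteristic different from 2 such that L' ⊆ Z(L) and dim L − dim Z(L) = 2. Then for any two commuting automorphisms α and β of L, the composite β ∘ α is a commuting automorphism of L. -/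
/-!
Let `Z` be the centre. If `x` and `y` are linearly independent modulo `Z`, they span `L` modulo
`Z` because `dim L/Z = 2`, so `⁅x, y⁆ = 0` would make `x` central. Hence a commuting automorphism
`α`, which preserves `Z`, maps every vector of `L/Z` to a multiple of itself, i.e. `α ≡ a • id`
modulo `Z`. Then `⁅β (α x), x⁆ = a • ⁅β x, x⁆ + ⁅β z, x⁆ = 0`, as `β z` is central too.
-/

open Module Submodule

namespace LieAlgebra

variable {F L : Type*} [Field F] [LieRing L] [LieAlgebra F L]

lemma _root_.LieEquiv.map_mem_center (α : L ≃ₗ⁅F⁆ L) {z : L} (hz : z ∈ center F L) :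
    α z ∈ center F L := by
  intro y
  rw [← α.apply_symm_apply y, ← LieEquiv.map_lie, hz, map_zero]

lemma lie_ne_zero_of_linearIndependent_mkQ_center
    (h : finrank F (L ⧸ (center F L).toSubmodule) = 2) {x y : L}
    (hxy : LinearIndependent F ![(center F L).toSubmodule.mkQ x,
      (center F L).toSubmodule.mkQ y]) :
    ⁅x, y⁆ ≠ 0 := by
  intro hxy0
  have hspan := hxy.span_eq_top_of_card_eq_finrank (by simp [h])
  rw [Matrix.range_cons_cons_empty] at hspan
  suffices hx : x ∈ center F L from
    hxy.ne_zero 0 (by simpa [Submodule.Quotient.mk_eq_zero] using hx)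
  intro z
  obtain ⟨s, t, hst⟩ :=
    mem_span_pair.mp (hspan ▸ mem_top (x := (center F L).toSubmodule.mkQ z))
  have hz : z - (s • x + t • y) ∈ center F L := by
    rw [← LieSubmodule.mem_toSubmodule, ← Submodule.Quotient.mk_eq_zero]
    simp only [mkQ_apply] at hst
    simp [← hst]
  have hxz : ⁅x, z⁆ = 0 := by simpa [← lie_skew y x, hxy0] using hz x
  rw [← lie_skew, hxz, neg_zero]

lemma exists_sub_smul_mem_center_of_lie_apply_self_eq_zero
    (h : finrank F (L ⧸ (center F L).toSubmodule) = 2) (α : L ≃ₗ⁅F⁆ L)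
    (hα : ∀ x, ⁅α x, x⁆ = 0) : ∃ a : F, ∀ x, α x - a • x ∈ center F L := by
  let αbar := (center F L).toSubmodule.mapQ (center F L).toSubmodule (α : L →ₗ[F] L)
    fun _ hz ↦ α.map_mem_center hz
  obtain ⟨a, ha⟩ := αbar.exists_eq_smul_id_of_forall_notLinearIndependent fun v hv ↦ by
    obtain ⟨x, rfl⟩ := mkQ_surjective _ v
    refine lie_ne_zero_of_linearIndependent_mkQ_center h hv ?_
    change ⁅x, α x⁆ = 0
    rw [← lie_skew, hα, neg_zero]
  refine ⟨a, fun x ↦ ?_⟩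
  rw [← LieSubmodule.mem_toSubmodule, ← Submodule.Quotient.mk_eq_zero,
    Submodule.Quotient.mk_sub, Submodule.Quotient.mk_smul, sub_eq_zero]
  exact LinearMap.congr_fun ha (Submodule.Quotient.mk x)

lemma lie_apply_apply_eq_zero_of_sub_smul_mem_center {f : L → L} {a : F}
    (hf : ∀ x, f x - a • x ∈ center F L) (β : L ≃ₗ⁅F⁆ L) (hβ : ∀ x, ⁅β x, x⁆ = 0) (x : L) :
    ⁅β (f x), x⁆ = 0 := by
  have hfx : f x = a • x + (f x - a • x) := by abel
  rw [hfx, map_add, map_smul, add_lie, smul_lie, hβ, smul_zero, zero_add, ← lie_skew,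
    β.map_mem_center (hf x) x, neg_zero]

end LieAlgebra

theorem comp_commuting_of_derived_le_center_codim_two_general {F L : Type*} [Field F] [LieRing L]
    [LieAlgebra F L] [FiniteDimensional F L]
    (hcodim : Module.finrank F L = Module.finrank F ↥(LieAlgebra.center F L) + 2)
    (α β : L ≃ₗ⁅F⁆ L) (hα : ∀ x : L, ⁅α x, x⁆ = 0) (hβ : ∀ x : L, ⁅β x, x⁆ = 0) :
    ∀ x : L, ⁅β (α x), x⁆ = 0 := by
  have hquot : finrank F (L ⧸ (LieAlgebra.center F L).toSubmodule) = 2 := by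
    have := (LieAlgebra.center F L).toSubmodule.finrank_quotient_add_finrank
    change _ + finrank F (LieAlgebra.center F L) = _ at this
    omega
  obtain ⟨a, ha⟩ := LieAlgebra.exists_sub_smul_mem_center_of_lie_apply_self_eq_zero hquot α hα
  exact LieAlgebra.lie_apply_apply_eq_zero_of_sub_smul_mem_center ha β hβ

/-- Let `L` be a finite-dimensional nilpotent Lie algebra over a field `𝔽` of characteristic
different from `2` such that `L' ⊆ Z(L)` and `dim L − dim Z(L) = 2`. Then the composite of any
two commuting automorphisms of `L` is again a commuting automorphism. -/
theorem comp_commuting_of_derived_le_center_codim_two {F L : Type*} [Field F] [LieRing L]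
    [LieAlgebra F L] [FiniteDimensional F L] [LieRing.IsNilpotent L]
    (hchar : ringChar F ≠ 2)
    (hder : LieModule.lowerCentralSeries F L L 1 ≤ LieAlgebra.center F L)
    (hcodim : Module.finrank F L = Module.finrank F ↥(LieAlgebra.center F L) + 2)
    (α β : L ≃ₗ⁅F⁆ L) (hα : ∀ x : L, ⁅α x, x⁆ = 0) (hβ : ∀ x : L, ⁅β x, x⁆ = 0) :
    ∀ x : L, ⁅β (α x), x⁆ = 0 :=
  comp_commuting_of_derived_le_center_codim_two_general hcodim α β hα hβ
end

section
/- Let L be a finite-dimensional nilpotent Lie algebra over a field 𝔽 of characteristic different from 2 such that dim Z₂(L) − dim Z(L) = 2 and Z(L) = L^k (the k-th term of the lower central series of L) for some k ≥ 1. Then for any two commuting automorphisms α and β of L, the composite β ∘ α is a commuting automorphism of L. -/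
/-- The second center `Z₂(L) = {x ∈ L : ⁅x, y⁆ ∈ Z(L) for all y ∈ L}` of a Lie algebra `L`,
as a Lie subalgebra of `L`. -/
def secondCenter (F L : Type*) [Field F] [LieRing L] [LieAlgebra F L] : LieSubalgebra F L where
  carrier := {x : L | ∀ y : L, ⁅x, y⁆ ∈ LieAlgebra.center F L}
  add_mem' := fun {a b} ha hb y => by
    rw [add_lie]; exact add_mem (ha y) (hb y)
  zero_mem' := fun y => by rw [zero_lie]; exact zero_mem _
  smul_mem' := fun c {x} hx y => by
    rw [smul_lie]; exact Submodule.smul_mem _ c (hx y)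
  lie_mem' := fun {a b} ha hb y => by
    have h1 : ⁅a, ⁅b, y⁆⁆ = 0 := (LieModule.mem_maxTrivSubmodule F L L ⁅b, y⁆).mp (hb y) a
    have h2 : ⁅b, ⁅a, y⁆⁆ = 0 := (LieModule.mem_maxTrivSubmodule F L L ⁅a, y⁆).mp (ha y) b
    have h3 : ⁅⁅a, b⁆, y⁆ = 0 := by rw [lie_lie, h1, h2, sub_zero]
    rw [h3]; exact zero_mem _


/-!
For a commuting automorphism `γ` write `C = γ - 1`. Polarizing `⁅γ x, x⁆ = 0` gives
`⁅C x, y⁆ = ⁅x, C y⁆` and then `⁅C z, ⁅a, m⁆⁆ = 2 ⁅⁅C z, a⁆, m⁆`. In characteristic `≠ 2` this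
identity makes `(x, y, z) ↦ ⁅⁅C x, y⁆, z⁆` alternating with central values, so
`⁅C x, y⁆ ∈ Z₂(L)`. As `dim Z₂(L)/Z(L) = 2`, the elements `⁅C x, y⁆, ⁅C y, z⁆, ⁅C z, x⁆` are
dependent modulo `Z(L)`, and bracketing a central combination of them with `z`, `x`, `y` kills
the alternating form: `C` maps `L` into `Z₂(L)`. Finally `⁅β (α x), x⁆ = ⁅A x, w⁆` with
`A = α - 1` and `w = β x - x`; a dependence of `A x, w, A w` modulo `Z(L)`, bracketed with `w`,
`x` and `A x`, gives `⁅A x, w⁆ = 0`.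
-/

theorem Submodule.exists_smul_add_smul_add_smul_mem_of_finrank_le {F V : Type*} [Field F]
    [AddCommGroup V] [Module F V] {N M : Submodule F V} [FiniteDimensional F M] (hNM : N ≤ M)
    (hdim : Module.finrank F M ≤ Module.finrank F N + 2) {u v w : V} (hu : u ∈ M) (hv : v ∈ M)
    (hw : w ∈ M) :
    ∃ a b c : F, (a ≠ 0 ∨ b ≠ 0 ∨ c ≠ 0) ∧ a • u + b • v + c • w ∈ N := by
  set N' := N.comap M.subtype
  have hquot : Module.finrank F (M ⧸ N') ≤ 2 := by
    have hsum := N'.finrank_quotient_add_finrank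
    have hN' : Module.finrank F N' = Module.finrank F N :=
      (Submodule.comapSubtypeEquivOfLe hNM).finrank_eq
    omega
  have hdep : ¬ LinearIndependent F ![N'.mkQ ⟨u, hu⟩, N'.mkQ ⟨v, hv⟩, N'.mkQ ⟨w, hw⟩] :=
    fun h ↦ by have := h.fintype_card_le_finrank; simp only [Fintype.card_fin] at this; omega
  obtain ⟨g, hg, i, hi⟩ := Fintype.not_linearIndependent_iff.mp hdep
  refine ⟨g 0, g 1, g 2, by fin_cases i <;> simp_all, ?_⟩
  simp only [Fin.sum_univ_three, Matrix.cons_val, ← map_smul, ← map_add] at hg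
  exact (Submodule.Quotient.mk_eq_zero N').mp hg

lemma LieAlgebra.mem_center_iff_forall_lie_eq_zero {R L : Type*} [CommRing R] [LieRing L]
    [LieAlgebra R L] {z : L} : z ∈ center R L ↔ ∀ y : L, ⁅z, y⁆ = 0 := by
  simp only [LieModule.mem_maxTrivSubmodule]
  exact forall_congr' fun y ↦ by rw [← lie_skew, neg_eq_zero]

theorem eq_zero_of_eq_neg {F M : Type*} [Field F] [AddCommGroup M] [Module F M]
    (h2 : (2 : F) ≠ 0) {v : M} (h : v = -v) : v = 0 := by
  have h' : (2 : F) • v = 0 := by rw [two_smul]; nth_rw 2 [h]; exact add_neg_cancel v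
  exact (smul_eq_zero.mp h').resolve_left h2

theorem eq_zero_of_antisymm_of_symm {F M α : Type*} [Field F] [AddCommGroup M] [Module F M]
    (h2 : (2 : F) ≠ 0) {f : α → α → α → M} (hanti : ∀ a b c, f a b c = -f b a c)
    (hsymm : ∀ a b c, f a b c = f a c b) (a b c : α) : f a b c = 0 := by
  have hneg : f a b c = -f a b c := calc
    f a b c = f a c b := hsymm a b c
    _ = -f c a b := hanti a c b
    _ = -f c b a := by rw [hsymm c a b]
    _ = f b c a := by rw [hanti c b a, neg_neg]
    _ = f b a c := hsymm b c a
    _ = -f a b c := hanti b a c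
  exact eq_zero_of_eq_neg h2 hneg

section

variable {F L : Type*} [Field F] [LieRing L] [LieAlgebra F L]

theorem lie_lie_swap_of_lie_lie_eq_two_smul {u : L} (h2 : (2 : F) ≠ 0)
    (hu : ∀ a m : L, ⁅u, ⁅a, m⁆⁆ = (2 : F) • ⁅⁅u, a⁆, m⁆) (y z : L) :
    ⁅⁅u, y⁆, z⁆ = -⁅⁅u, z⁆, y⁆ := by
  have h : (2 : F) • (⁅⁅u, y⁆, z⁆ + ⁅⁅u, z⁆, y⁆) = 0 := by
    rw [smul_add, ← hu, ← hu, ← lie_add, ← lie_skew z y, add_neg_cancel, lie_zero]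
  exact eq_neg_of_add_eq_zero_left ((smul_eq_zero.mp h).resolve_left h2)

theorem lie_lie_lie_swap_of_lie_lie_eq_two_smul {u : L} (h2 : (2 : F) ≠ 0)
    (hu : ∀ a m : L, ⁅u, ⁅a, m⁆⁆ = (2 : F) • ⁅⁅u, a⁆, m⁆) (y z w : L) :
    ⁅⁅⁅u, y⁆, z⁆, w⁆ = ⁅⁅⁅u, y⁆, w⁆, z⁆ := by
  have jacobi (p : L) : ⁅p, ⁅z, w⁆⁆ = ⁅⁅p, z⁆, w⁆ - ⁅⁅p, w⁆, z⁆ := by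
    rw [leibniz_lie, ← lie_skew z, sub_eq_add_neg]
  -- by `hu`, `⁅u, ·⁆` maps the two sides of the Jacobi identity to `2 • X` and `4 • X`, with `X`
  -- the difference in `h'`
  have h := congrArg (⁅u, ·⁆) (jacobi y)
  simp only [lie_sub, hu, smul_lie] at h
  rw [jacobi] at h
  have h' : (2 : F) • (⁅⁅⁅u, y⁆, z⁆, w⁆ - ⁅⁅⁅u, y⁆, w⁆, z⁆) = 0 := by
    linear_combination (norm := module) -h
  exact sub_eq_zero.mp ((smul_eq_zero.mp h').resolve_left h2)

theorem lie_lie_lie_eq_zero_of_lie_lie_eq_two_smul {u : L} (h2 : (2 : F) ≠ 0)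
    (hu : ∀ a m : L, ⁅u, ⁅a, m⁆⁆ = (2 : F) • ⁅⁅u, a⁆, m⁆) (y z w : L) :
    ⁅⁅⁅u, y⁆, z⁆, w⁆ = 0 :=
  eq_zero_of_antisymm_of_symm (f := fun y z w ↦ ⁅⁅⁅u, y⁆, z⁆, w⁆) h2
    (fun y z w ↦ by simp only [lie_lie_swap_of_lie_lie_eq_two_smul h2 hu y z, neg_lie])
    (lie_lie_lie_swap_of_lie_lie_eq_two_smul h2 hu) y z w

theorem center_le_secondCenter :
    (LieAlgebra.center F L : Submodule F L) ≤ (secondCenter F L).toSubmodule :=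
  fun z hz y ↦ by
    rw [LieAlgebra.mem_center_iff_forall_lie_eq_zero.mp hz y]
    exact zero_mem _

theorem exists_smul_add_smul_add_smul_mem_center
    (hdim : Module.finrank F (secondCenter F L) = Module.finrank F (LieAlgebra.center F L) + 2)
    {u v w : L} (hu : u ∈ secondCenter F L) (hv : v ∈ secondCenter F L)
    (hw : w ∈ secondCenter F L) :
    ∃ a b c : F, (a ≠ 0 ∨ b ≠ 0 ∨ c ≠ 0) ∧ a • u + b • v + c • w ∈ LieAlgebra.center F L := by
  have : FiniteDimensional F (secondCenter F L) := Module.finite_of_finrank_pos (by omega)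
  exact Submodule.exists_smul_add_smul_add_smul_mem_of_finrank_le center_le_secondCenter
    hdim.le hu hv hw

def LieEquiv.IsCommuting (γ : L ≃ₗ⁅F⁆ L) : Prop := ∀ x : L, ⁅γ x, x⁆ = 0

namespace LieEquiv.IsCommuting

variable {γ : L ≃ₗ⁅F⁆ L}

theorem lie_apply_comm (hγ : γ.IsCommuting) (a b : L) : ⁅γ a, b⁆ = ⁅a, γ b⁆ := by
  have h := hγ (a + b)
  rw [map_add, add_lie, lie_add, lie_add, hγ a, hγ b, zero_add, add_zero] at h
  rw [← lie_skew a (γ b), eq_neg_of_add_eq_zero_left h]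

theorem lie_sub_self_comm (hγ : γ.IsCommuting) (a b : L) :
    ⁅γ a - a, b⁆ = ⁅a, γ b - b⁆ := by
  rw [sub_lie, lie_sub, hγ.lie_apply_comm]

theorem lie_lie_sub_self_self (hγ : γ.IsCommuting) (x z : L) : ⁅x, ⁅γ x - x, z⁆⁆ = 0 := by
  obtain ⟨y, rfl⟩ : ∃ y, γ y = z := ⟨γ.symm z, γ.apply_symm_apply z⟩
  rw [sub_lie, lie_sub, ← γ.map_lie, ← hγ.lie_apply_comm x, leibniz_lie (γ x), hγ x, zero_lie,
    zero_add, ← hγ.lie_apply_comm x y, sub_self]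

theorem lie_lie_sub_self_anticomm (hγ : γ.IsCommuting) (w x y : L) :
    ⁅x, ⁅y, γ w - w⁆⁆ = -⁅y, ⁅x, γ w - w⁆⁆ := by
  have h := hγ.lie_lie_sub_self_self (x + y) w
  rw [map_add, add_sub_add_comm, add_lie, add_lie, lie_add, lie_add, hγ.lie_lie_sub_self_self,
    hγ.lie_lie_sub_self_self, zero_add, add_zero] at h
  rw [← hγ.lie_sub_self_comm y, ← hγ.lie_sub_self_comm x]
  exact eq_neg_of_add_eq_zero_left h

theorem lie_sub_self_lie (hγ : γ.IsCommuting) (z a m : L) :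
    ⁅γ z - z, ⁅a, m⁆⁆ = (2 : F) • ⁅⁅γ z - z, a⁆, m⁆ := by
  have h : ⁅a, ⁅γ z - z, m⁆⁆ = ⁅⁅γ z - z, a⁆, m⁆ := by
    rw [← lie_skew (γ z - z) m, lie_neg, hγ.lie_lie_sub_self_anticomm, neg_neg,
      ← lie_skew (γ z - z) a, neg_lie, ← lie_skew _ m, neg_neg]
  rw [leibniz_lie, h, two_smul]

theorem sub_self_lie_self (hγ : γ.IsCommuting) (x : L) : ⁅γ x - x, x⁆ = 0 := by
  rw [sub_lie, hγ x, lie_self, sub_zero]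

theorem lie_sub_self (hγ : γ.IsCommuting) (x : L) : ⁅x, γ x - x⁆ = 0 := by
  rw [← lie_skew, hγ.sub_self_lie_self, neg_zero]

theorem lie_sub_self_mem_secondCenter (h2 : (2 : F) ≠ 0) (hγ : γ.IsCommuting) (x y : L) :
    ⁅γ x - x, y⁆ ∈ secondCenter F L := fun z ↦
  LieAlgebra.mem_center_iff_forall_lie_eq_zero.mpr
    (lie_lie_lie_eq_zero_of_lie_lie_eq_two_smul h2 (hγ.lie_sub_self_lie x) y z)

theorem lie_lie_sub_self_swap (h2 : (2 : F) ≠ 0) (hγ : γ.IsCommuting) (x y z : L) :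
    ⁅⁅γ x - x, y⁆, z⁆ = -⁅⁅γ x - x, z⁆, y⁆ :=
  lie_lie_swap_of_lie_lie_eq_two_smul h2 (hγ.lie_sub_self_lie x) y z

theorem lie_lie_sub_self_cycle (h2 : (2 : F) ≠ 0) (hγ : γ.IsCommuting) (x y z : L) :
    ⁅⁅γ x - x, y⁆, z⁆ = ⁅⁅γ y - y, z⁆, x⁆ := by
  rw [hγ.lie_sub_self_comm, ← lie_skew x, neg_lie, hγ.lie_lie_sub_self_swap h2, neg_neg]

theorem lie_lie_sub_self_self_right (h2 : (2 : F) ≠ 0) (hγ : γ.IsCommuting) (x y : L) :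
    ⁅⁅γ x - x, y⁆, y⁆ = 0 :=
  eq_zero_of_eq_neg h2 (hγ.lie_lie_sub_self_swap h2 x y y)

theorem lie_lie_sub_self_self_left (h2 : (2 : F) ≠ 0) (hγ : γ.IsCommuting) (x y : L) :
    ⁅⁅γ x - x, y⁆, x⁆ = 0 := by
  rw [hγ.lie_lie_sub_self_cycle h2, hγ.lie_lie_sub_self_self_right h2]

theorem sub_self_mem_secondCenter (h2 : (2 : F) ≠ 0)
    (hdim : Module.finrank F (secondCenter F L) = Module.finrank F (LieAlgebra.center F L) + 2)
    (hγ : γ.IsCommuting) (x : L) : γ x - x ∈ secondCenter F L := by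
  intro y
  refine LieAlgebra.mem_center_iff_forall_lie_eq_zero.mpr fun z ↦ ?_
  by_contra hθ
  obtain ⟨a, b, c, hne, hmem⟩ := exists_smul_add_smul_add_smul_mem_center hdim
    (hγ.lie_sub_self_mem_secondCenter h2 x y) (hγ.lie_sub_self_mem_secondCenter h2 y z)
    (hγ.lie_sub_self_mem_secondCenter h2 z x)
  have hbr (t : L) := LieAlgebra.mem_center_iff_forall_lie_eq_zero.mp hmem t
  simp only [add_lie, smul_lie] at hbr
  have ha : a = 0 := by
    refine (smul_eq_zero.mp ?_).resolve_right hθ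
    simpa only [hγ.lie_lie_sub_self_self_right h2, hγ.lie_lie_sub_self_self_left h2, smul_zero,
      add_zero] using hbr z
  have hb : b = 0 := by
    refine (smul_eq_zero.mp ?_).resolve_right hθ
    simpa only [hγ.lie_lie_sub_self_self_right h2, hγ.lie_lie_sub_self_self_left h2, smul_zero,
      add_zero, zero_add, ← hγ.lie_lie_sub_self_cycle h2 x] using hbr x
  have hc : c = 0 := by
    refine (smul_eq_zero.mp ?_).resolve_right hθ
    simpa only [hγ.lie_lie_sub_self_self_right h2, hγ.lie_lie_sub_self_self_left h2, smul_zero,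
      zero_add, ← hγ.lie_lie_sub_self_cycle h2 y, ← hγ.lie_lie_sub_self_cycle h2 x] using hbr y
  simp only [ha, hb, hc, ne_eq, not_true_eq_false, or_self] at hne

theorem lie_sub_self_eq_zero_of_mem_secondCenter (h2 : (2 : F) ≠ 0)
    (hdim : Module.finrank F (secondCenter F L) = Module.finrank F (LieAlgebra.center F L) + 2)
    {α : L ≃ₗ⁅F⁆ L} (hα : α.IsCommuting) {x w : L} (hw : w ∈ secondCenter F L)
    (hxw : ⁅x, w⁆ = 0) : ⁅α x - x, w⁆ = 0 := by
  by_contra hX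
  obtain ⟨a, b, c, hne, hmem⟩ := exists_smul_add_smul_add_smul_mem_center hdim
    (hα.sub_self_mem_secondCenter h2 hdim x) hw (hα.sub_self_mem_secondCenter h2 hdim w)
  have hleft (t : L) : ⁅t, a • (α x - x) + b • w + c • (α w - w)⁆ = 0 := hmem t
  have hright (t : L) := LieAlgebra.mem_center_iff_forall_lie_eq_zero.mp hmem t
  have ha : a = 0 := by
    refine (smul_eq_zero.mp ?_).resolve_right hX
    simpa only [add_lie, smul_lie, lie_self, hα.sub_self_lie_self, smul_zero, add_zero]
      using hright w
  have hc : c = 0 := by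
    refine (smul_eq_zero.mp ?_).resolve_right hX
    simpa only [lie_add, lie_smul, hα.lie_sub_self, hxw, ← hα.lie_sub_self_comm x,
      smul_zero, zero_add] using hleft x
  have hb : b = 0 := by
    refine (smul_eq_zero.mp ?_).resolve_right hX
    simpa only [ha, hc, zero_smul, zero_add, add_zero, lie_smul] using hleft (α x - x)
  simp only [ha, hb, hc, ne_eq, not_true_eq_false, or_self] at hne

end LieEquiv.IsCommuting

end

theorem comp_commuting_of_second_center_codim_two_center_term_lcs_general {F L : Type*} [Field F]
    [LieRing L] [LieAlgebra F L]
    (hchar : ringChar F ≠ 2)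
    (hdim : Module.finrank F ↥(secondCenter F L) =
      Module.finrank F ↥(LieAlgebra.center F L) + 2)
    (α β : L ≃ₗ⁅F⁆ L) (hα : ∀ x : L, ⁅α x, x⁆ = 0) (hβ : ∀ x : L, ⁅β x, x⁆ = 0) :
    ∀ x : L, ⁅β (α x), x⁆ = 0 := by
  intro x
  have h2 : (2 : F) ≠ 0 := Ring.two_ne_zero hchar
  have hα : α.IsCommuting := hα
  have hβ : β.IsCommuting := hβ
  calc ⁅β (α x), x⁆ = ⁅α x, β x⁆ := hβ.lie_apply_comm (α x) x
    _ = ⁅α x - x, β x - x⁆ := by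
      rw [lie_sub, hα.sub_self_lie_self, sub_zero, sub_lie, ← lie_skew x, hβ x, neg_zero,
        sub_zero]
    _ = 0 := hα.lie_sub_self_eq_zero_of_mem_secondCenter h2 hdim
      (hβ.sub_self_mem_secondCenter h2 hdim x) (hβ.lie_sub_self x)

/-- Let `L` be a finite-dimensional nilpotent Lie algebra over a field `𝔽` of characteristic
different from `2` with `dim Z₂(L) − dim Z(L) = 2` and `Z(L) = L^k` (the `k`-th term of the
lower central series) for some `k ≥ 1`. Then the composite of any two commuting automorphisms
of `L` is again a commuting automorphism. -/
theorem comp_commuting_of_second_center_codim_two_center_term_lcs {F L : Type*} [Field F]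
    [LieRing L] [LieAlgebra F L] [FiniteDimensional F L] [LieRing.IsNilpotent L]
    (hchar : ringChar F ≠ 2)
    (hdim : Module.finrank F ↥(secondCenter F L) =
      Module.finrank F ↥(LieAlgebra.center F L) + 2)
    (k : ℕ) (hk : 1 ≤ k)
    (hZ : (LieAlgebra.center F L : LieSubmodule F L L) = LieModule.lowerCentralSeries F L L k)
    (α β : L ≃ₗ⁅F⁆ L) (hα : ∀ x : L, ⁅α x, x⁆ = 0) (hβ : ∀ x : L, ⁅β x, x⁆ = 0) :
    ∀ x : L, ⁅β (α x), x⁆ = 0 :=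
  comp_commuting_of_second_center_codim_two_center_term_lcs_general hchar hdim α β hα hβ
end

section
/- Let L be a finite-dimensional nilpotent Lie algebra over a field 𝔽 with dim L' = 1, L' ⊆ Z(L), and dim L − dim Z(L) ≥ 4 (so L is a Heisenberg Lie algebra up to isoclinism of dimension at least 5). Then there exist commuting automorphisms α and β of L such that the composite α ∘ β is not a commuting automorphism; in particular, the set of commuting automorphisms of L does not form a subgroup of Aut(L). -/
/-!
Choose `z` spanning `L'` and a functional `g` with `⁅a, b⁆ = g ⁅a, b⁆ • z`, so that the bracket is
governed by the alternating form `ω(a, b) = g ⁅a, b⁆`, whose radical is the centre. As `z` is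
central, a linear map fixing `z` and preserving `ω` is a Lie automorphism. For `ω(u, v) = 2` the map
`x ↦ x + ω(v, x) u - ω(u, x) v` is such a map; it is an involution, and it is commuting because
the bracket of its value at `x` with `x` is `(ω(v, x) ω(u, x) - ω(u, x) ω(v, x)) z = 0`. Since the centre has codimension at least `4`,
there are `ω`-orthogonal hyperbolic pairs `(x₁, y₁)`, `(x₂, y₂)`. The maps attached to
`(x₂ - x₁, y₂ - y₁)` and to `(x₂ + y₁, y₂ - x₁)` then compose to send `x₁` to `y₁`, and
`⁅y₁, x₁⁆ = -z ≠ 0`.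
-/

open LieAlgebra LieModule Module

namespace LieAlgebra

section PlaneReflection

variable {R L : Type*} [CommRing R] [LieRing L] [LieAlgebra R L]

lemma apply_lie_swap (g : Dual R L) (a b : L) : g ⁅a, b⁆ = -g ⁅b, a⁆ := by
  rw [← lie_skew, map_neg]

/-- For `g ⁅u, v⁆ = 2`, this is `-1` on `span {u, v}` and the identity on its orthogonal for the
form `g ⁅·, ·⁆`. -/
def planeReflection (g : Dual R L) (u v : L) : L →ₗ[R] L :=
  LinearMap.id + (g ∘ₗ ad R L v).smulRight u - (g ∘ₗ ad R L u).smulRight v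

@[simp]
lemma planeReflection_apply (g : Dual R L) (u v x : L) :
    planeReflection g u v x = x + g ⁅v, x⁆ • u - g ⁅u, x⁆ • v :=
  rfl

variable {g : Dual R L} {u v : L}

lemma planeReflection_planeReflection (huv : g ⁅u, v⁆ = 2) (x : L) :
    planeReflection g u v (planeReflection g u v x) = x := by
  simp only [map_add, map_sub, map_smul, planeReflection_apply, lie_self, map_zero, huv,
    apply_lie_swap g v u]
  module

lemma apply_lie_planeReflection (huv : g ⁅u, v⁆ = 2) (x y : L) :
    g ⁅planeReflection g u v x, planeReflection g u v y⁆ = g ⁅x, y⁆ := by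
  simp only [planeReflection_apply, lie_add, lie_sub, lie_smul, add_lie, sub_lie, smul_lie,
    lie_self, map_add, map_sub, map_smul, map_zero, smul_eq_mul, huv, apply_lie_swap g v u,
    apply_lie_swap g x u, apply_lie_swap g x v]
  ring

variable {z : L}

lemma lie_planeReflection_self (hz : ∀ a b : L, ⁅a, b⁆ = g ⁅a, b⁆ • z) (u v x : L) :
    ⁅planeReflection g u v x, x⁆ = 0 := by
  have hform : g ⁅planeReflection g u v x, x⁆ = 0 := by
    simp only [planeReflection_apply, sub_lie, add_lie, smul_lie, lie_self, map_sub, map_add,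
      map_smul, map_zero, smul_eq_mul]
    ring
  rw [hz, hform, zero_smul]

lemma planeReflection_lie (hz : ∀ a b : L, ⁅a, b⁆ = g ⁅a, b⁆ • z) (hzc : z ∈ center R L)
    (huv : g ⁅u, v⁆ = 2) (x y : L) :
    planeReflection g u v ⁅x, y⁆ = ⁅planeReflection g u v x, planeReflection g u v y⁆ := by
  have hcentral (a : L) : ⁅a, ⁅x, y⁆⁆ = 0 := by
    rw [hz x y, lie_smul, (mem_maxTrivSubmodule R L L z).mp hzc a, smul_zero]
  rw [hz (planeReflection g u v x), apply_lie_planeReflection huv, ← hz, planeReflection_apply,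
    hcentral, hcentral, map_zero, zero_smul, zero_smul, add_zero, sub_zero]

def planeReflectionEquiv (hz : ∀ a b : L, ⁅a, b⁆ = g ⁅a, b⁆ • z) (hzc : z ∈ center R L)
    (huv : g ⁅u, v⁆ = 2) : L ≃ₗ⁅R⁆ L :=
  { planeReflection g u v with
    map_lie' := planeReflection_lie hz hzc huv _ _
    invFun := planeReflection g u v
    left_inv := planeReflection_planeReflection huv
    right_inv := planeReflection_planeReflection huv }

@[simp]
lemma planeReflectionEquiv_apply (hz : ∀ a b : L, ⁅a, b⁆ = g ⁅a, b⁆ • z) (hzc : z ∈ center R L)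
    (huv : g ⁅u, v⁆ = 2) (x : L) :
    planeReflectionEquiv hz hzc huv x = planeReflection g u v x :=
  rfl

lemma planeReflection_planeReflection_eq {x₁ y₁ x₂ y₂ : L} (h₁ : g ⁅x₁, y₁⁆ = 1)
    (h₂ : g ⁅x₂, y₂⁆ = 1) (hx₁x₂ : g ⁅x₁, x₂⁆ = 0) (hx₁y₂ : g ⁅x₁, y₂⁆ = 0)
    (hy₁y₂ : g ⁅y₁, y₂⁆ = 0) :
    planeReflection g (x₂ - x₁) (y₂ - y₁) (planeReflection g (x₂ + y₁) (y₂ - x₁) x₁) = y₁ := by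
  have hx₁ : planeReflection g (x₂ + y₁) (y₂ - x₁) x₁ = y₂ := by
    simp only [planeReflection_apply, add_lie, sub_lie, lie_self, map_add, map_sub, map_zero,
      apply_lie_swap g x₂ x₁, apply_lie_swap g y₁ x₁, apply_lie_swap g y₂ x₁, h₁, hx₁x₂, hx₁y₂]
    module
  rw [hx₁]
  simp only [planeReflection_apply, sub_lie, lie_self, map_sub, map_zero, h₂, hx₁y₂, hy₁y₂]
  module

end PlaneReflection

section Field

variable {F L : Type*} [Field F] [LieRing L] [LieAlgebra F L]

lemma exists_lie_eq_smul_of_finrank_lowerCentralSeries_one_eq_one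
    (h : finrank F (lowerCentralSeries F L L 1) = 1) :
    ∃ (z : L) (g : Dual F L), z ∈ lowerCentralSeries F L L 1 ∧ z ≠ 0 ∧
      ∀ a b : L, ⁅a, b⁆ = g ⁅a, b⁆ • z := by
  obtain ⟨⟨z, hzD⟩, hz0, hspan⟩ := finrank_eq_one_iff'.mp h
  have hz0 : z ≠ 0 := fun h ↦ hz0 (Subtype.ext h)
  obtain ⟨g, hg⟩ := exists_dual_forall_apply_eq_one (s := {()}) (v := fun _ ↦ z)
    ((linearIndepOn_singleton_iff F).mpr hz0)
  refine ⟨z, g, hzD, hz0, fun a b ↦ ?_⟩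
  obtain ⟨c, hc⟩ := hspan ⟨⁅a, b⁆, iterate_toEnd_mem_lowerCentralSeries F L L a b 1⟩
  have hab : c • z = ⁅a, b⁆ := congrArg Subtype.val hc
  rw [← hab, map_smul, hg () rfl, smul_eq_mul, mul_one]

lemma exists_notMem_center_apply_lie_eq_zero [FiniteDimensional F L] (g : Dual F L)
    (h : finrank F (center F L) + 2 < finrank F L) (x y : L) :
    ∃ w ∉ center F L, g ⁅x, w⁆ = 0 ∧ g ⁅y, w⁆ = 0 := by
  set φ : L →ₗ[F] F × F := (g ∘ₗ ad F L x).prod (g ∘ₗ ad F L y)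
  have hker : finrank F L ≤ 2 + finrank F (LinearMap.ker φ) := by
    have hrange := (LinearMap.range φ).finrank_le
    rw [finrank_prod, finrank_self] at hrange
    have := φ.finrank_range_add_finrank_ker
    omega
  have hnle : ¬ LinearMap.ker φ ≤ (center F L : Submodule F L) := fun hle ↦ by
    have : finrank F (LinearMap.ker φ) ≤ finrank F (center F L) := Submodule.finrank_mono hle
    omega
  obtain ⟨w, hw, hwZ⟩ := SetLike.not_le_iff_exists.mp hnle
  exact ⟨w, hwZ, congrArg Prod.fst hw, congrArg Prod.snd hw⟩

variable {g : Dual F L} {z : L}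

lemma exists_apply_lie_eq_one_of_notMem_center (hz : ∀ a b : L, ⁅a, b⁆ = g ⁅a, b⁆ • z) {x : L}
    (hx : x ∉ center F L) : ∃ y, g ⁅x, y⁆ = 1 := by
  obtain ⟨y, hy⟩ : ∃ y, g ⁅x, y⁆ ≠ 0 := by
    contrapose! hx
    refine (mem_maxTrivSubmodule F L L x).mpr fun y ↦ ?_
    rw [hz, apply_lie_swap, hx, neg_zero, zero_smul]
  exact ⟨(g ⁅x, y⁆)⁻¹ • y, by rw [lie_smul, map_smul, smul_eq_mul, inv_mul_cancel₀ hy]⟩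

lemma exists_orthogonal_hyperbolic_pairs [FiniteDimensional F L]
    (hz : ∀ a b : L, ⁅a, b⁆ = g ⁅a, b⁆ • z)
    (h : finrank F (center F L) + 2 < finrank F L) :
    ∃ x₁ y₁ x₂ y₂ : L, g ⁅x₁, y₁⁆ = 1 ∧ g ⁅x₂, y₂⁆ = 1 ∧ g ⁅x₁, x₂⁆ = 0 ∧ g ⁅x₁, y₂⁆ = 0 ∧
      g ⁅y₁, x₂⁆ = 0 ∧ g ⁅y₁, y₂⁆ = 0 := by
  obtain ⟨x₁, hx₁⟩ : ∃ x, x ∉ center F L := by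
    by_contra! hall
    have htop : center F L = ⊤ := eq_top_iff.mpr fun x _ ↦ hall x
    have : finrank F (⊤ : LieIdeal F L) = finrank F L := finrank_top F L
    rw [htop] at h
    omega
  obtain ⟨y₁, h₁⟩ := exists_apply_lie_eq_one_of_notMem_center hz hx₁
  obtain ⟨x₂, hx₂, hx₁x₂, hy₁x₂⟩ := exists_notMem_center_apply_lie_eq_zero g h x₁ y₁
  obtain ⟨w, hw⟩ := exists_apply_lie_eq_one_of_notMem_center hz hx₂
  have hy₁x₁ : g ⁅y₁, x₁⁆ = -1 := by rw [apply_lie_swap, h₁]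
  -- `y₂` is `w` with its components along the pair `(x₁, y₁)` removed.
  refine ⟨x₁, y₁, x₂, w - g ⁅w, y₁⁆ • x₁ + g ⁅w, x₁⁆ • y₁, h₁, ?_, hx₁x₂, ?_, hy₁x₂, ?_⟩ <;>
    simp only [lie_add, lie_sub, lie_smul, lie_self, map_add, map_sub, map_smul, map_zero,
      smul_eq_mul, apply_lie_swap g x₂ x₁, apply_lie_swap g x₂ y₁, apply_lie_swap g x₁ w,
      apply_lie_swap g y₁ w, hx₁x₂, hy₁x₂, hw, h₁, hy₁x₁] <;>
    ring

end Field

end LieAlgebra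

theorem exists_commuting_auts_comp_not_commuting_of_heisenberg_general {F L : Type*} [Field F]
    [LieRing L] [LieAlgebra F L] [FiniteDimensional F L]
    (hder : Module.finrank F ↥(LieModule.lowerCentralSeries F L L 1) = 1)
    (hderZ : LieModule.lowerCentralSeries F L L 1 ≤ LieAlgebra.center F L)
    (hcodim : Module.finrank F ↥(LieAlgebra.center F L) + 4 ≤ Module.finrank F L) :
    ∃ α β : L ≃ₗ⁅F⁆ L, (∀ x : L, ⁅α x, x⁆ = 0) ∧ (∀ x : L, ⁅β x, x⁆ = 0) ∧
      ¬ (∀ x : L, ⁅α (β x), x⁆ = 0) := by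
  obtain ⟨z, g, hzD, hz0, hz⟩ := exists_lie_eq_smul_of_finrank_lowerCentralSeries_one_eq_one hder
  obtain ⟨x₁, y₁, x₂, y₂, h₁, h₂, hx₁x₂, hx₁y₂, hy₁x₂, hy₁y₂⟩ :=
    exists_orthogonal_hyperbolic_pairs hz (by omega)
  have hα : g ⁅x₂ - x₁, y₂ - y₁⁆ = 2 := by
    simp only [lie_sub, sub_lie, map_sub, h₁, h₂, hx₁y₂, apply_lie_swap g x₂ y₁, hy₁x₂]
    norm_num
  have hβ : g ⁅x₂ + y₁, y₂ - x₁⁆ = 2 := by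
    simp only [lie_sub, add_lie, map_sub, map_add, h₁, h₂, hy₁y₂, apply_lie_swap g x₂ x₁,
      apply_lie_swap g y₁ x₁, hx₁x₂]
    norm_num
  refine ⟨planeReflectionEquiv hz (hderZ hzD) hα, planeReflectionEquiv hz (hderZ hzD) hβ,
    lie_planeReflection_self hz _ _, lie_planeReflection_self hz _ _, fun h ↦ hz0 ?_⟩
  have hx₁ := h x₁
  rw [planeReflectionEquiv_apply, planeReflectionEquiv_apply,
    planeReflection_planeReflection_eq h₁ h₂ hx₁x₂ hx₁y₂ hy₁y₂, hz, apply_lie_swap, h₁] at hx₁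
  simpa using hx₁

/-- Let `L` be a finite-dimensional nilpotent Lie algebra over a field `𝔽` with
`dim L' = 1`, `L' ⊆ Z(L)` and `dim L − dim Z(L) ≥ 4` (so `L` is a Heisenberg Lie algebra up to
isoclinism, of dimension at least `5`). Then there exist commuting automorphisms `α` and `β` of
`L` whose composite `α ∘ β` is not a commuting automorphism; in particular the set of commuting
automorphisms of `L` does not form a subgroup of `Aut(L)`. -/
theorem exists_commuting_auts_comp_not_commuting_of_heisenberg {F L : Type*} [Field F]
    [LieRing L] [LieAlgebra F L] [FiniteDimensional F L] [LieRing.IsNilpotent L]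
    (hder : Module.finrank F ↥(LieModule.lowerCentralSeries F L L 1) = 1)
    (hderZ : LieModule.lowerCentralSeries F L L 1 ≤ LieAlgebra.center F L)
    (hcodim : Module.finrank F ↥(LieAlgebra.center F L) + 4 ≤ Module.finrank F L) :
    ∃ α β : L ≃ₗ⁅F⁆ L, (∀ x : L, ⁅α x, x⁆ = 0) ∧ (∀ x : L, ⁅β x, x⁆ = 0) ∧
      ¬ (∀ x : L, ⁅α (β x), x⁆ = 0) :=
  exists_commuting_auts_comp_not_commuting_of_heisenberg_general hder hderZ hcodim
end

section
/- Let L be a 5-dimensional nilpotent Lie algebra of coclass 3 (i.e., of nilpotency class 2) over a field 𝔽 of characteristic different from 2. Then there exist commuting automorphisms α and β of L whose composite α ∘ β is not a commuting automorphism (i.e., 𝒜(L) is not a subgroup of Aut(L)) if and only if L' = Z(L) and dim Z(L) = 1. -/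
/-!
Since `L' ≤ Z(L)` and `L' ≠ 0`, the right-hand side just says `dim Z(L) = 1`.

If `dim L / Z(L) ≤ 3`, some `x` has centraliser `Z(L) + F x`: either any noncentral `u` does, or
`u` commutes with some `v ∉ Z(L) + F u`, and then `Z(L) + F u + F v` is an abelian hyperplane and
any `x` outside it works. Every commuting map then acts as a scalar on `L / Z(L)`, so composites
of commuting maps are commuting.

If `Z(L) = F z`, then `⁅x, y⁆ = ω x y • z` for an alternating form `ω`, which has two orthogonal
hyperbolic pairs `(e₁, f₁)`, `(e₂, f₂)` when `dim L = 5`. The `ω`-preserving involutions that are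
`-1` on `span {e₂, f₂}` and on `span {e₁ - e₂, f₁ - f₂}` are commuting, but their product sends
`e₁ + f₂` to `f₁ - e₂`, and `⁅f₁ - e₂, e₁ + f₂⁆ = -2 • z ≠ 0`.
-/

open Module Submodule

namespace LieAlgebra

variable {F L : Type*} [Field F] [LieRing L] [LieAlgebra F L]

theorem lie_eq_zero_of_mem_center {w : L} (hw : w ∈ center F L) (y : L) : ⁅w, y⁆ = 0 := by
  rw [← lie_skew, hw y, neg_zero]

section Commuting

variable {α β : L →ₗ[F] L}

theorem lie_apply_eq_lie_apply_of_commuting (hα : ∀ x, ⁅α x, x⁆ = 0) (x y : L) :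
    ⁅α x, y⁆ = ⁅x, α y⁆ := by
  have h := hα (x + y)
  rw [map_add, add_lie, lie_add, lie_add, hα x, hα y, zero_add, add_zero] at h
  rw [← lie_skew x]
  exact eq_neg_of_add_eq_zero_left h

theorem apply_mem_center_of_commuting (hα : ∀ x, ⁅α x, x⁆ = 0) {z : L}
    (hz : z ∈ center F L) : α z ∈ center F L := by
  rw [LieModule.mem_maxTrivSubmodule] at hz ⊢
  intro y
  rw [← lie_skew, lie_apply_eq_lie_apply_of_commuting hα, ← lie_skew, hz, neg_zero, neg_zero]

theorem commuting_of_sub_smul_mem_center {c : F} (h : ∀ x, α x - c • x ∈ center F L) (x : L) :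
    ⁅α x, x⁆ = 0 := by
  have hx := (LieModule.mem_maxTrivSubmodule F L L _).mp (h x) x
  rwa [lie_sub, lie_smul, lie_self, smul_zero, sub_zero, ← lie_skew, neg_eq_zero] at hx

theorem comp_sub_smul_mem_center (hα : ∀ x, ⁅α x, x⁆ = 0) {a b : F}
    (ha : ∀ x, α x - a • x ∈ center F L) (hb : ∀ x, β x - b • x ∈ center F L) (x : L) :
    α (β x) - (a * b) • x ∈ center F L := by
  have h : α (β x) - (a * b) • x = α (β x - b • x) + b • (α x - a • x) := by
    rw [map_sub, map_smul]
    module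
  rw [h]
  exact add_mem (apply_mem_center_of_commuting hα (hb x))
    (Submodule.smul_mem (center F L).toSubmodule b (ha x))

/-- If `α x - c • x` is central, then `α - c` maps `L` into the centraliser `Z(L) + F x` of `x`,
and `⁅α y, y⁆ = 0` kills the `x`-component of `α y - c • y` as soon as `⁅x, y⁆ ≠ 0`. -/
theorem exists_sub_smul_mem_center_of_commuting {x : L}
    (hx : LinearMap.ker (ad F L x) ≤ (center F L).toSubmodule ⊔ span F {x})
    (hα : ∀ y, ⁅α y, y⁆ = 0) : ∃ c : F, ∀ y, α y - c • y ∈ center F L := by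
  obtain ⟨c, hc⟩ : ∃ c : F, α x - c • x ∈ center F L := by
    have hαx : α x ∈ LinearMap.ker (ad F L x) := by
      rw [LinearMap.mem_ker, ad_apply, ← lie_skew, hα, neg_zero]
    obtain ⟨w, hw, t, ht, hwt⟩ := mem_sup.mp (hx hαx)
    obtain ⟨c, rfl⟩ := mem_span_singleton.mp ht
    exact ⟨c, by rwa [← hwt, add_sub_cancel_right]⟩
  let V := (center F L).toSubmodule.comap (α - c • LinearMap.id)
  have hZV : (center F L).toSubmodule ⊔ span F {x} ≤ V := by
    refine sup_le (fun z hz => ?_) (span_le.mpr (Set.singleton_subset_iff.mpr hc))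
    exact sub_mem (apply_mem_center_of_commuting hα hz) (Submodule.smul_mem _ c hz)
  refine ⟨c, fun y => ?_⟩
  by_cases hxy : ⁅x, y⁆ = 0
  · exact hZV (hx hxy)
  have hD : α y - c • y ∈ LinearMap.ker (ad F L x) := by
    rw [LinearMap.mem_ker, ad_apply, lie_sub, lie_smul, ← lie_apply_eq_lie_apply_of_commuting hα,
      ← smul_lie, ← sub_lie, lie_eq_zero_of_mem_center hc]
  obtain ⟨w, hw, t, ht, hwt⟩ := mem_sup.mp (hx hD)
  obtain ⟨p, rfl⟩ := mem_span_singleton.mp ht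
  have hp : p = 0 := by
    have h0 : ⁅α y - c • y, y⁆ = 0 := by
      rw [sub_lie, smul_lie, lie_self, smul_zero, sub_zero, hα]
    rw [← hwt, add_lie, lie_eq_zero_of_mem_center hw, zero_add, smul_lie, smul_eq_zero] at h0
    exact h0.resolve_right hxy
  rwa [← hwt, hp, zero_smul, add_zero]

end Commuting

section Centralizer

theorem ker_ad_le_center_sup_span_of_sup_span_eq_top {Q : Submodule F L}
    (hQ : ∀ p ∈ Q, ∀ q ∈ Q, ⁅p, q⁆ = 0) {x : L} (hQx : Q ⊔ span F {x} = ⊤) :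
    LinearMap.ker (ad F L x) ≤ (center F L).toSubmodule ⊔ span F {x} := by
  have hL : ∀ y : L, ∃ p ∈ Q, ∃ b : F, p + b • x = y := fun y => by
    obtain ⟨p, hp, t, ht, hpt⟩ := mem_sup.mp (hQx ▸ mem_top : y ∈ Q ⊔ span F {x})
    obtain ⟨b, rfl⟩ := mem_span_singleton.mp ht
    exact ⟨p, hp, b, hpt⟩
  intro y hy
  obtain ⟨p, hp, b, rfl⟩ := hL y
  have hpx : ⁅x, p⁆ = 0 := by
    rwa [LinearMap.mem_ker, ad_apply, lie_add, lie_smul, lie_self, smul_zero, add_zero] at hy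
  have hpZ : p ∈ center F L := by
    rw [LieModule.mem_maxTrivSubmodule]
    intro u
    obtain ⟨q, hq, a, rfl⟩ := hL u
    rw [add_lie, smul_lie, hpx, smul_zero, add_zero, hQ q hq p hp]
  exact add_mem (mem_sup_left hpZ) (mem_sup_right (smul_mem _ b (mem_span_singleton_self x)))

theorem lie_eq_zero_of_mem_center_sup_span_sup_span {u v : L} (huv : ⁅u, v⁆ = 0) :
    ∀ p ∈ (center F L).toSubmodule ⊔ span F {u} ⊔ span F {v},
      ∀ q ∈ (center F L).toSubmodule ⊔ span F {u} ⊔ span F {v}, ⁅p, q⁆ = 0 := by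
  have hdecomp : ∀ p ∈ (center F L).toSubmodule ⊔ span F {u} ⊔ span F {v},
      ∃ w ∈ center F L, ∃ a b : F, w + a • u + b • v = p := by
    intro p hp
    obtain ⟨p', hp', t, ht, rfl⟩ := mem_sup.mp hp
    obtain ⟨w, hw, s, hs, rfl⟩ := mem_sup.mp hp'
    obtain ⟨a, rfl⟩ := mem_span_singleton.mp hs
    obtain ⟨b, rfl⟩ := mem_span_singleton.mp ht
    exact ⟨w, hw, a, b, rfl⟩
  have hvu : ⁅v, u⁆ = 0 := by rw [← lie_skew, huv, neg_zero]
  rintro p hp q hq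
  obtain ⟨w, hw, a, b, rfl⟩ := hdecomp p hp
  obtain ⟨w', hw', a', b', rfl⟩ := hdecomp q hq
  simp only [add_lie, lie_add, smul_lie, lie_smul, lie_self, huv, hvu, hw' u, hw' v,
    lie_eq_zero_of_mem_center hw, smul_zero, add_zero]

theorem exists_ker_ad_le_center_sup_span [FiniteDimensional F L]
    (h : finrank F L ≤ finrank F (center F L) + 3) :
    ∃ x : L, LinearMap.ker (ad F L x) ≤ (center F L).toSubmodule ⊔ span F {x} := by
  by_cases hZ : (center F L).toSubmodule = ⊤
  · exact ⟨0, by simp [hZ]⟩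
  obtain ⟨u, hu⟩ : ∃ u, u ∉ (center F L).toSubmodule := by
    by_contra! hall
    exact hZ (eq_top_iff'.mpr hall)
  by_cases hCu : LinearMap.ker (ad F L u) ≤ (center F L).toSubmodule ⊔ span F {u}
  · exact ⟨u, hCu⟩
  obtain ⟨v, hv, hvZu⟩ := SetLike.not_le_iff_exists.mp hCu
  set Q := (center F L).toSubmodule ⊔ span F {u} ⊔ span F {v}
  have hQ := lie_eq_zero_of_mem_center_sup_span_sup_span (F := F) hv
  obtain ⟨x, hx⟩ : ∃ x, x ∉ Q := by
    by_contra! hQtop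
    exact hu fun y => hQ y (hQtop y) u (mem_sup_left (mem_sup_right (mem_span_singleton_self u)))
  refine ⟨x, ker_ad_le_center_sup_span_of_sup_span_eq_top hQ ?_⟩
  apply eq_top_of_finrank_eq
  have := (Q ⊔ span F {x}).finrank_le
  rw [finrank_sup_span_singleton hx, finrank_sup_span_singleton hvZu,
    finrank_sup_span_singleton hu] at this ⊢
  have hZrank : finrank F (center F L).toSubmodule = finrank F (center F L) := rfl
  omega

theorem commuting_comp_of_finrank_le_finrank_center_add_three [FiniteDimensional F L]
    (h : finrank F L ≤ finrank F (center F L) + 3) {α β : L →ₗ[F] L}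
    (hα : ∀ x, ⁅α x, x⁆ = 0) (hβ : ∀ x, ⁅β x, x⁆ = 0) (x : L) : ⁅α (β x), x⁆ = 0 := by
  obtain ⟨y, hy⟩ := exists_ker_ad_le_center_sup_span h
  obtain ⟨a, ha⟩ := exists_sub_smul_mem_center_of_commuting hy hα
  obtain ⟨b, hb⟩ := exists_sub_smul_mem_center_of_commuting hy hβ
  exact commuting_of_sub_smul_mem_center (α := α ∘ₗ β) (comp_sub_smul_mem_center hα ha hb) x

end Centralizer

section SymplecticReflection

variable (g : L →ₗ[F] F)

/-- Writing `ω x y = g ⁅x, y⁆`, this is `x ↦ x + ω v x • u - ω u x • v`. When `ω u v = 2` it acts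
as `-1` on `span {u, v}` and as the identity on the `ω`-orthogonal of `span {u, v}`. -/
def symplecticReflection (u v : L) : L →ₗ[F] L :=
  LinearMap.id + (g ∘ₗ ad F L v).smulRight u - (g ∘ₗ ad F L u).smulRight v

variable {g}

theorem symplecticReflection_apply (u v x : L) :
    symplecticReflection g u v x = x + g ⁅v, x⁆ • u - g ⁅u, x⁆ • v :=
  rfl

theorem apply_lie_swap_s14 (x y : L) : g ⁅y, x⁆ = -g ⁅x, y⁆ := by
  rw [← lie_skew, map_neg]

theorem symplecticReflection_involutive {u v : L} (huv : g ⁅u, v⁆ = 2) :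
    Function.Involutive (symplecticReflection g u v) := by
  intro x
  have hvu : g ⁅v, u⁆ = -2 := by rw [apply_lie_swap_s14, huv]
  simp only [symplecticReflection_apply, lie_self, map_add, map_sub, map_smul, map_zero, huv, hvu]
  module

variable {z : L}

theorem lie_symplecticReflection_apply_self (hbr : ∀ x y : L, ⁅x, y⁆ = g ⁅x, y⁆ • z)
    (u v x : L) : ⁅symplecticReflection g u v x, x⁆ = 0 := by
  rw [hbr, symplecticReflection_apply]
  simp only [add_lie, sub_lie, smul_lie, lie_self, map_sub, map_smul, smul_eq_mul, zero_add]
  rw [mul_comm, sub_self, zero_smul]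

theorem symplecticReflection_map_lie (hbr : ∀ x y : L, ⁅x, y⁆ = g ⁅x, y⁆ • z)
    (hz : z ∈ center F L) {u v : L} (huv : g ⁅u, v⁆ = 2) (x y : L) :
    symplecticReflection g u v ⁅x, y⁆ =
      ⁅symplecticReflection g u v x, symplecticReflection g u v y⁆ := by
  have hxy : ⁅x, y⁆ ∈ center F L := by
    rw [hbr]
    exact Submodule.smul_mem (center F L).toSubmodule _ hz
  have hvu : g ⁅v, u⁆ = -2 := by rw [apply_lie_swap_s14, huv]
  rw [symplecticReflection_apply, hxy v, hxy u, map_zero, zero_smul, add_zero, zero_smul,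
    sub_zero, hbr (symplecticReflection g u v x), hbr x y]
  congr 1
  simp only [symplecticReflection_apply, add_lie, lie_add, sub_lie, lie_sub, smul_lie, lie_smul,
    lie_self, map_add, map_sub, map_smul, smul_eq_mul, map_zero, apply_lie_swap_s14 x u,
    apply_lie_swap_s14 x v, huv, hvu]
  ring

noncomputable def symplecticReflectionEquiv (hbr : ∀ x y : L, ⁅x, y⁆ = g ⁅x, y⁆ • z)
    (hz : z ∈ center F L) {u v : L} (huv : g ⁅u, v⁆ = 2) : L ≃ₗ⁅F⁆ L :=
  LieEquiv.ofBijective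
    { symplecticReflection g u v with
      map_lie' := fun {x y} => symplecticReflection_map_lie hbr hz huv x y }
    (symplecticReflection_involutive huv).bijective

theorem symplecticReflectionEquiv_apply (hbr : ∀ x y : L, ⁅x, y⁆ = g ⁅x, y⁆ • z)
    (hz : z ∈ center F L) {u v : L} (huv : g ⁅u, v⁆ = 2) (x : L) :
    symplecticReflectionEquiv hbr hz huv x = symplecticReflection g u v x :=
  rfl

theorem exists_commuting_lieEquiv_comp_not_commuting_of_symplectic_pairs (h2 : (2 : F) ≠ 0)
    (hbr : ∀ x y : L, ⁅x, y⁆ = g ⁅x, y⁆ • z) (hz : z ∈ center F L) (hz0 : z ≠ 0)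
    {e₁ f₁ e₂ f₂ : L} (h₁ : g ⁅e₁, f₁⁆ = 1) (h₂ : g ⁅e₂, f₂⁆ = 1) (hee : g ⁅e₁, e₂⁆ = 0)
    (hef : g ⁅e₁, f₂⁆ = 0) (hfe : g ⁅f₁, e₂⁆ = 0) (hff : g ⁅f₁, f₂⁆ = 0) :
    ∃ α β : L ≃ₗ⁅F⁆ L, (∀ x, ⁅α x, x⁆ = 0) ∧ (∀ x, ⁅β x, x⁆ = 0) ∧
      ¬ ∀ x, ⁅α (β x), x⁆ = 0 := by
  have h₁' : g ⁅f₁, e₁⁆ = -1 := by rw [apply_lie_swap_s14, h₁]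
  have h₂' : g ⁅f₂, e₂⁆ = -1 := by rw [apply_lie_swap_s14, h₂]
  have hee' : g ⁅e₂, e₁⁆ = 0 := by rw [apply_lie_swap_s14, hee, neg_zero]
  have hef' : g ⁅f₂, e₁⁆ = 0 := by rw [apply_lie_swap_s14, hef, neg_zero]
  have hfe' : g ⁅e₂, f₁⁆ = 0 := by rw [apply_lie_swap_s14, hfe, neg_zero]
  have hff' : g ⁅f₂, f₁⁆ = 0 := by rw [apply_lie_swap_s14, hff, neg_zero]
  have hα : g ⁅e₂, (2 : F) • f₂⁆ = 2 := by rw [lie_smul, map_smul, h₂, smul_eq_mul, mul_one]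
  have hβ : g ⁅e₁ - e₂, f₁ - f₂⁆ = 2 := by
    simp only [sub_lie, lie_sub, map_sub, h₁, h₂, hef, hfe']
    norm_num
  refine ⟨symplecticReflectionEquiv hbr hz hα, symplecticReflectionEquiv hbr hz hβ,
    lie_symplecticReflection_apply_self hbr _ _, lie_symplecticReflection_apply_self hbr _ _,
    fun h => ?_⟩
  have hβx : symplecticReflection g (e₁ - e₂) (f₁ - f₂) (e₁ + f₂) = e₂ + f₁ := by
    simp only [symplecticReflection_apply, sub_lie, map_sub, map_add, lie_self, map_zero, h₁',
      hff, hef', hef, hee', h₂]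
    module
  have hαx : symplecticReflection g e₂ ((2 : F) • f₂) (e₂ + f₁) = f₁ - e₂ := by
    simp only [symplecticReflection_apply, smul_lie, map_smul, map_add, lie_self, map_zero, h₂',
      hff', hfe', smul_eq_mul]
    module
  have hval : g ⁅f₁ - e₂, e₁ + f₂⁆ = -2 := by
    simp only [sub_lie, lie_add, map_sub, map_add, h₁', hff, hee', h₂]
    norm_num
  have hx := h (e₁ + f₂)
  rw [symplecticReflectionEquiv_apply, symplecticReflectionEquiv_apply, hβx, hαx, hbr, hval,
    neg_smul, neg_eq_zero, smul_eq_zero] at hx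
  exact hx.elim h2 hz0

theorem exists_apply_lie_eq_one (hbr : ∀ x y : L, ⁅x, y⁆ = g ⁅x, y⁆ • z) {x : L}
    (hx : x ∉ center F L) : ∃ y, g ⁅x, y⁆ = 1 := by
  obtain ⟨y, hy⟩ : ∃ y : L, ⁅x, y⁆ ≠ 0 := by
    by_contra! h
    exact hx fun y => by rw [← lie_skew, h y, neg_zero]
  have hgy : g ⁅x, y⁆ ≠ 0 := fun h0 => hy (by rw [hbr, h0, zero_smul])
  exact ⟨(g ⁅x, y⁆)⁻¹ • y, by rw [lie_smul, map_smul, smul_eq_mul, inv_mul_cancel₀ hgy]⟩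

theorem exists_symplectic_pairs [FiniteDimensional F L]
    (hdim : finrank F (center F L) + 3 ≤ finrank F L) (hbr : ∀ x y : L, ⁅x, y⁆ = g ⁅x, y⁆ • z) :
    ∃ e₁ f₁ e₂ f₂ : L, g ⁅e₁, f₁⁆ = 1 ∧ g ⁅e₂, f₂⁆ = 1 ∧ g ⁅e₁, e₂⁆ = 0 ∧ g ⁅e₁, f₂⁆ = 0 ∧
      g ⁅f₁, e₂⁆ = 0 ∧ g ⁅f₁, f₂⁆ = 0 := by
  have hZrank : finrank F (center F L).toSubmodule = finrank F (center F L) := rfl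
  obtain ⟨e₁, he₁⟩ : ∃ e₁ : L, e₁ ∉ center F L := by
    by_contra! h
    have := congrArg (fun S : Submodule F L => finrank F S) (eq_top_iff'.mpr h)
    simp only [finrank_top] at this
    omega
  obtain ⟨f₁, h₁⟩ := exists_apply_lie_eq_one hbr he₁
  let φ := (g ∘ₗ ad F L e₁).prod (g ∘ₗ ad F L f₁)
  obtain ⟨e₂, hφe₂, he₂⟩ : ∃ e₂ ∈ LinearMap.ker φ, e₂ ∉ (center F L).toSubmodule := by
    refine SetLike.not_le_iff_exists.mp fun hle => ?_
    have hrange := (LinearMap.range φ).finrank_le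
    have := LinearMap.finrank_range_add_finrank_ker φ
    have := Submodule.finrank_mono hle
    rw [finrank_prod, finrank_self] at hrange
    omega
  have hee : g ⁅e₁, e₂⁆ = 0 := congrArg Prod.fst hφe₂
  have hfe : g ⁅f₁, e₂⁆ = 0 := congrArg Prod.snd hφe₂
  obtain ⟨v, hv⟩ := exists_apply_lie_eq_one hbr he₂
  -- project `v` onto the `ω`-orthogonal of `span {e₁, f₁}`
  refine ⟨e₁, f₁, e₂, v - g ⁅e₁, v⁆ • f₁ + g ⁅f₁, v⁆ • e₁, h₁, ?_, hee, ?_, hfe, ?_⟩ <;>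
  simp only [lie_add, lie_sub, lie_smul, lie_self, map_add, map_sub, map_smul, smul_eq_mul,
    map_zero, apply_lie_swap_s14 e₁ e₂, apply_lie_swap_s14 f₁ e₂, apply_lie_swap_s14 e₁ f₁, h₁, hv, hee,
    hfe] <;>
  ring

theorem exists_lie_eq_smul_of_finrank_center_eq_one (hk : finrank F (center F L) = 1)
    (hL' : ∀ x y : L, ⁅x, y⁆ ∈ center F L) :
    ∃ (g : L →ₗ[F] F) (z : L), z ∈ center F L ∧ z ≠ 0 ∧ ∀ x y : L, ⁅x, y⁆ = g ⁅x, y⁆ • z := by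
  obtain ⟨⟨z, hz⟩, hz0, hspan⟩ := finrank_eq_one_iff'.mp hk
  have hz0' : z ≠ 0 := fun h => hz0 (Subtype.ext h)
  obtain ⟨g, hg⟩ := Module.Projective.exists_dual_eq_one F hz0'
  refine ⟨g, z, hz, hz0', fun x y => ?_⟩
  obtain ⟨c, hc⟩ := hspan ⟨⁅x, y⁆, hL' x y⟩
  have hc' : c • z = ⁅x, y⁆ := congrArg Subtype.val hc
  rw [← hc', map_smul, hg, smul_eq_mul, mul_one]

end SymplecticReflection

section ClassTwo

theorem lie_mem_lowerCentralSeries_one (x y : L) :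
    ⁅x, y⁆ ∈ LieModule.lowerCentralSeries F L L 1 := by
  rw [LieModule.lowerCentralSeries_succ, LieModule.lowerCentralSeries_zero]
  exact LieSubmodule.lie_mem_lie (LieSubmodule.mem_top x) (LieSubmodule.mem_top y)

theorem lowerCentralSeries_one_le_center (h : LieModule.lowerCentralSeries F L L 2 = ⊥) :
    LieModule.lowerCentralSeries F L L 1 ≤ center F L := by
  have hgc := (LieSubmodule.lcs_add_le_iff (N₁ := (⊤ : LieSubmodule F L L)) (N₂ := ⊥) 1 1).mp
  rw [LieSubmodule.ucs_bot_one] at hgc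
  exact hgc h.le

theorem eq_center_and_finrank_eq_one [FiniteDimensional F L] {I : LieIdeal F L}
    (hIZ : I ≤ center F L) (hI : I ≠ ⊥) (hk : finrank F (center F L) ≤ 1) :
    I = center F L ∧ finrank F (center F L) = 1 := by
  have hIZ' := (LieSubmodule.toSubmodule_le_toSubmodule _ _).mpr hIZ
  have h₁ := Submodule.one_le_finrank_iff.mpr (by simpa using hI : I.toSubmodule ≠ ⊥)
  have h₂ := Submodule.finrank_mono hIZ'
  have hZrank : finrank F (center F L).toSubmodule = finrank F (center F L) := rfl
  exact ⟨LieSubmodule.toSubmodule_injective (Submodule.eq_of_le_of_finrank_le hIZ' (by omega)),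
    by omega⟩

end ClassTwo

end LieAlgebra

/-- Let `L` be a `5`-dimensional nilpotent Lie algebra of coclass `3` (i.e. of nilpotency class
`2`) over a field `𝔽` of characteristic different from `2`. Then there exist commuting
automorphisms `α` and `β` of `L` whose composite `α ∘ β` is not a commuting automorphism
(i.e. `𝒜(L)` is not a subgroup of `Aut(L)`) if and only if `L' = Z(L)` and `dim Z(L) = 1`. -/
theorem exists_commuting_auts_comp_not_commuting_iff_of_dim_five_coclass_three
    {F L : Type*} [Field F] [LieRing L] [LieAlgebra F L] [FiniteDimensional F L]
    (hchar : ringChar F ≠ 2) (hdim : Module.finrank F L = 5)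
    (hclass : LieModule.lowerCentralSeries F L L 2 = ⊥)
    (hclass' : LieModule.lowerCentralSeries F L L 1 ≠ ⊥) :
    (∃ α β : L ≃ₗ⁅F⁆ L, (∀ x : L, ⁅α x, x⁆ = 0) ∧ (∀ x : L, ⁅β x, x⁆ = 0) ∧
        ¬ (∀ x : L, ⁅α (β x), x⁆ = 0)) ↔
      (LieModule.lowerCentralSeries F L L 1 = LieAlgebra.center F L ∧
        Module.finrank F ↥(LieAlgebra.center F L) = 1) := by
  have hL' := LieAlgebra.lowerCentralSeries_one_le_center hclass
  constructor
  · rintro ⟨α, β, hα, hβ, hαβ⟩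
    have hk : Module.finrank F (LieAlgebra.center F L) ≤ 1 := by
      by_contra! hk
      exact hαβ (LieAlgebra.commuting_comp_of_finrank_le_finrank_center_add_three (by omega)
        (α := α.toLinearMap) (β := β.toLinearMap) hα hβ)
    exact LieAlgebra.eq_center_and_finrank_eq_one hL' hclass' hk
  · rintro ⟨-, hk⟩
    obtain ⟨g, z, hz, hz0, hbr⟩ := LieAlgebra.exists_lie_eq_smul_of_finrank_center_eq_one hk
      fun x y => hL' (LieAlgebra.lie_mem_lowerCentralSeries_one x y)
    obtain ⟨e₁, f₁, e₂, f₂, h₁, h₂, hee, hef, hfe, hff⟩ :=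
      LieAlgebra.exists_symplectic_pairs (by omega) hbr
    exact LieAlgebra.exists_commuting_lieEquiv_comp_not_commuting_of_symplectic_pairs
      (Ring.two_ne_zero hchar) hbr hz hz0 h₁ h₂ hee hef hfe hff
end

section
/- Let L be an n-dimensional nilpotent Lie algebra of coclass 3 (i.e., of nilpotency class n − 3) over a field 𝔽 with n ≥ 6. Then 1 ≤ dim Z(L) ≤ 3 and 2 ≤ dim Z₂(L) ≤ 4. -/
open LieAlgebra LieModule LieSubmodule Module

section LieModule

variable {R L M : Type*} [CommRing R] [LieRing L] [LieAlgebra R L] [AddCommGroup M] [Module R M]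
  [LieRingModule L M] [LieModule R L M] [IsNilpotent L M]

theorem LieModule.lowerCentralSeries_eq_bot_of_le_succ {k : ℕ}
    (h : lowerCentralSeries R L M k ≤ lowerCentralSeries R L M (k + 1)) :
    lowerCentralSeries R L M k = ⊥ := by
  have hconst : ∀ i, lowerCentralSeries R L M (k + i) = lowerCentralSeries R L M k := by
    intro i
    induction i with
    | zero => rfl
    | succ i ih =>
      rw [← add_assoc, lowerCentralSeries_succ, ih, ← lowerCentralSeries_succ]
      exact le_antisymm (antitone_lowerCentralSeries R L M k.le_succ) h
  obtain ⟨c, hc⟩ := IsNilpotent.nilpotent R L M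
  rw [← hconst c, ← le_bot_iff, ← hc]
  exact antitone_lowerCentralSeries R L M (Nat.le_add_left c k)

theorem LieModule.lowerCentralSeries_eq_bot_of_le_top_lie_sup {W : LieSubmodule R L M}
    (hW : ⁅(⊤ : LieIdeal R L), W⁆ ≤ maxTrivSubmodule R L M) {k : ℕ}
    (h : lowerCentralSeries R L M (k + 1) ≤
      ⁅(⊤ : LieIdeal R L), lowerCentralSeries R L M (k + 1) ⊔ W⁆) :
    lowerCentralSeries R L M (k + 2) = ⊥ := by
  have hZ : lowerCentralSeries R L M (k + 1) ≤
      lowerCentralSeries R L M (k + 2) ⊔ maxTrivSubmodule R L M := by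
    rw [lie_sup, ← lowerCentralSeries_succ] at h
    exact h.trans (sup_le_sup_left hW _)
  apply lowerCentralSeries_eq_bot_of_le_succ
  calc lowerCentralSeries R L M (k + 2)
      = ⁅(⊤ : LieIdeal R L), lowerCentralSeries R L M (k + 1)⁆ :=
        lowerCentralSeries_succ R L M (k + 1)
    _ ≤ ⁅⊤, lowerCentralSeries R L M (k + 2) ⊔ maxTrivSubmodule R L M⁆ := mono_lie_right ⊤ hZ
    _ = lowerCentralSeries R L M (k + 3) := by
      rw [lie_sup, ideal_oper_maxTrivSubmodule_eq_bot, sup_bot_eq, ← lowerCentralSeries_succ]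

theorem LieModule.lowerCentralSeries_succ_sup_lt {W : LieSubmodule R L M}
    (hW : ⁅(⊤ : LieIdeal R L), W⁆ ≤ maxTrivSubmodule R L M) {k : ℕ}
    (hk : lowerCentralSeries R L M (k + 2) ≠ ⊥) :
    lowerCentralSeries R L M (k + 1) ⊔ W < lowerCentralSeries R L M k ⊔ W := by
  refine lt_of_le_of_ne (sup_le_sup_right (antitone_lowerCentralSeries R L M k.le_succ) W) ?_
  intro heq
  refine hk (lowerCentralSeries_eq_bot_of_le_top_lie_sup hW ?_)
  rw [heq, lowerCentralSeries_succ]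
  exact mono_lie_right ⊤ le_sup_left

end LieModule

theorem Submodule.exists_sub_smul_mem_of_finrank_le_succ {K V : Type*} [Field K] [AddCommGroup V]
    [Module K V] [FiniteDimensional K V] (P : Submodule K V) (h : finrank K V ≤ finrank K P + 1) :
    ∃ x : V, ∀ y : V, ∃ c : K, y - c • x ∈ P := by
  have hq : finrank K (V ⧸ P) ≤ 1 := by
    have := P.finrank_quotient_add_finrank
    omega
  obtain ⟨v, hv⟩ := finrank_le_one_iff.mp hq
  obtain ⟨x, rfl⟩ := P.mkQ_surjective v
  refine ⟨x, fun y => ?_⟩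
  obtain ⟨c, hc⟩ := hv (P.mkQ y)
  exact ⟨c, (Submodule.Quotient.eq P).mp (by simpa using hc.symm)⟩

section LieAlgebra

variable {F L : Type*} [Field F] [LieRing L] [LieAlgebra F L] [FiniteDimensional F L]

theorem LieIdeal.lowerCentralSeries_one_le_top_lie_of_finrank_le_succ (P : LieIdeal F L)
    (h : finrank F L ≤ finrank F P + 1) :
    lowerCentralSeries F L L 1 ≤ ⁅(⊤ : LieIdeal F L), P⁆ := by
  obtain ⟨x, hx⟩ := Submodule.exists_sub_smul_mem_of_finrank_le_succ P.toSubmodule h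
  rw [lowerCentralSeries_succ, lowerCentralSeries_zero, lie_le_iff]
  intro y _ z _
  obtain ⟨a, hy⟩ := hx y
  obtain ⟨b, hz⟩ := hx z
  have hyz : ⁅y, z⁆ = ⁅y, z - b • x⁆ - b • ⁅x, y - a • x⁆ := by
    rw [lie_sub, lie_sub, lie_smul, lie_smul, lie_self, smul_zero, sub_zero, ← lie_skew x y,
      smul_neg]
    abel
  rw [hyz]
  exact sub_mem (lie_mem_lie (mem_top y) hz)
    (Submodule.smul_mem _ b (lie_mem_lie (mem_top x) hy))

variable [IsNilpotent L L] {W : LieIdeal F L}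

theorem LieAlgebra.finrank_lowerCentralSeries_one_sup_add_two_le
    (hW : ⁅(⊤ : LieIdeal F L), W⁆ ≤ center F L) (h2 : lowerCentralSeries F L L 2 ≠ ⊥) :
    finrank F ↥(lowerCentralSeries F L L 1 ⊔ W) + 2 ≤ finrank F L := by
  by_contra! hlt
  exact h2 <| lowerCentralSeries_eq_bot_of_le_top_lie_sup hW (k := 0) <|
    LieIdeal.lowerCentralSeries_one_le_top_lie_of_finrank_le_succ _ (by rw [zero_add]; omega)

theorem LieAlgebra.finrank_lowerCentralSeries_sup_add_le
    (hW : ⁅(⊤ : LieIdeal F L), W⁆ ≤ center F L) {k : ℕ}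
    (hk : lowerCentralSeries F L L (k + 2) ≠ ⊥) :
    finrank F ↥(lowerCentralSeries F L L (k + 1) ⊔ W) + (k + 2) ≤ finrank F L := by
  induction k with
  | zero => exact finrank_lowerCentralSeries_one_sup_add_two_le hW hk
  | succ k ih =>
    have hk' : lowerCentralSeries F L L (k + 2) ≠ ⊥ := fun h =>
      hk (le_bot_iff.mp (h ▸ antitone_lowerCentralSeries F L L (k + 2).le_succ))
    have hlt : finrank F ↥(lowerCentralSeries F L L (k + 1 + 1) ⊔ W) <
        finrank F ↥(lowerCentralSeries F L L (k + 1) ⊔ W) :=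
      Submodule.finrank_lt_finrank_of_lt (lowerCentralSeries_succ_sup_lt hW hk)
    have := ih hk'
    omega

end LieAlgebra

theorem finrank_secondCenter (F L : Type*) [Field F] [LieRing L] [LieAlgebra F L] :
    finrank F (secondCenter F L) = finrank F (LieAlgebra.center F L).normalizer := by
  have h : (secondCenter F L).toSubmodule =
      ((LieAlgebra.center F L).normalizer : Submodule F L) := by
    ext x
    refine (mem_normalizer _ x).trans (forall_congr' fun y => ?_) |>.symm
    rw [← lie_skew, neg_mem_iff]
  exact (LinearEquiv.ofEq _ _ h).finrank_eq

/-- Let `L` be an `n`-dimensional nilpotent Lie algebra of coclass `3` (i.e. of nilpotency class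
`n − 3`) over a field `𝔽`, with `n ≥ 6`. Then `1 ≤ dim Z(L) ≤ 3` and `2 ≤ dim Z₂(L) ≤ 4`. -/
theorem center_second_center_dim_bounds_of_coclass_three {F L : Type*} [Field F] [LieRing L]
    [LieAlgebra F L] [FiniteDimensional F L]
    (n : ℕ) (hn : Module.finrank F L = n) (hn6 : 6 ≤ n)
    (hclass : LieModule.lowerCentralSeries F L L (n - 3) = ⊥)
    (hclass' : LieModule.lowerCentralSeries F L L (n - 4) ≠ ⊥) :
    (1 ≤ Module.finrank F ↥(LieAlgebra.center F L) ∧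
      Module.finrank F ↥(LieAlgebra.center F L) ≤ 3) ∧
    (2 ≤ Module.finrank F ↥(secondCenter F L) ∧
      Module.finrank F ↥(secondCenter F L) ≤ 4) := by
  obtain ⟨m, rfl⟩ : ∃ m, n = m + 6 := ⟨n - 6, by omega⟩
  rw [show m + 6 - 3 = m + 2 + 1 by omega] at hclass
  rw [show m + 6 - 4 = m + 2 by omega] at hclass'
  have : IsNilpotent L L := .mk L hclass
  rw [finrank_secondCenter]
  set Z := center F L
  have hlast : lowerCentralSeries F L L (m + 2) ≤ Z := by
    rwa [le_max_triv_iff_bracket_eq_bot, ← LieModule.lowerCentralSeries_succ]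
  have hsecond : lowerCentralSeries F L L (m + 1) ≤ Z.normalizer := by
    rwa [← top_lie_le_iff_le_normalizer, ← LieModule.lowerCentralSeries_succ]
  have hnot_center : ¬ lowerCentralSeries F L L (m + 1) ≤ Z := by
    rwa [le_max_triv_iff_bracket_eq_bot, ← LieModule.lowerCentralSeries_succ]
  have hZ_bound := finrank_lowerCentralSeries_sup_add_le (W := Z)
    (by rw [ideal_oper_maxTrivSubmodule_eq_bot]; exact bot_le) hclass'
  have hZ₂_bound := finrank_lowerCentralSeries_sup_add_le (W := Z.normalizer)
    ((top_lie_le_iff_le_normalizer _ _).mpr le_rfl) hclass'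
  rw [sup_eq_right.mpr hsecond] at hZ₂_bound
  have hZ_lt : finrank F Z < finrank F ↥(lowerCentralSeries F L L (m + 1) ⊔ Z) :=
    Submodule.finrank_lt_finrank_of_lt (right_lt_sup.mpr hnot_center)
  have hZ_lt_Z₂ : finrank F Z < finrank F Z.normalizer :=
    Submodule.finrank_lt_finrank_of_lt <|
      (le_normalizer Z).lt_of_ne fun h => hnot_center (h ▸ hsecond)
  have hZ_pos : 0 < finrank F Z :=
    finrank_pos_iff.mpr <| (nontrivial_iff_ne_bot F L L).mpr fun h =>
      hclass' (le_bot_iff.mp (h ▸ hlast))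
  omega
end

section
/- Let L be an n-dimensional nilpotent Lie algebra of coclass 3 (i.e., of nilpotency class n − 3) over a field 𝔽 of characteristic different from 2, with n ≥ 6. Suppose one of the following holds: (i) dim Z(L) ≠ 1; (ii) dim Z(L) = 1 and 2 ≤ dim Z₂(L) ≤ 3; (iii) dim Z(L) = 1, dim Z₂(L) = 4, and n − 3 ≤ dim L' ≤ n − 2. Then Z₂(L) is abelian, i.e., ⁅a, b⁆ = 0 for all a, b ∈ Z₂(L). -/
/-!
Suppose `a, b ∈ Z₂(L)` with `⁅a, b⁆ ≠ 0`. Since `Z₂(L)` centralizes `L' + Z(L)`, the elements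
`a` and `b` are linearly independent modulo `L' + Z(L)`. An ideal `K` of codimension at most one
satisfies `L' = ⁅L, K⁆`; for `K = L' + Z₂(L)` this would give `L' + Z(L) ⊆ L^2 + Z(L)`, which is
impossible in a nilpotent Lie algebra with `L^2 ≠ 0`. Hence
`dim (L' + Z(L)) + 4 ≤ dim (L' + Z₂(L)) + 2 ≤ n`. The chain `L^i + Z(L)` strictly decreases
down to `L^(n-4) + Z(L) = Z(L)`, so `dim (L' + Z(L)) ≥ dim Z(L) + n - 5`, forcing `dim Z(L) = 1`
and excluding (i); `dim L' ≤ n - 4` excludes (iii); and `L^(n-5) ⊕ ⟨a, b⟩ ⊆ Z₂(L)` with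
`dim L^(n-5) ≥ 2` excludes (ii).
-/

open Module

lemma Submodule.exists_sup_span_singleton_eq_top {K V : Type*} [Field K] [AddCommGroup V]
    [Module K V] [FiniteDimensional K V] {W : Submodule K V}
    (h : finrank K V ≤ finrank K W + 1) : ∃ v, W ⊔ span K {v} = ⊤ := by
  by_cases hW : W = ⊤
  · exact ⟨0, by simp [hW]⟩
  obtain ⟨v, -, hv⟩ := SetLike.exists_of_lt (lt_top_iff_ne_top.mpr hW)
  refine ⟨v, Submodule.eq_top_of_finrank_eq (le_antisymm (Submodule.finrank_le _) ?_)⟩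
  rwa [Submodule.finrank_sup_span_singleton hv]

lemma LieSubmodule.finrank_lt_finrank_of_lt {K L M : Type*} [Field K] [LieRing L]
    [AddCommGroup M] [Module K M] [LieRingModule L M] [FiniteDimensional K M]
    {N₁ N₂ : LieSubmodule K L M} (h : N₁ < N₂) : finrank K N₁ < finrank K N₂ :=
  Submodule.finrank_lt_finrank_of_lt
    ((LieSubmodule.toSubmodule_orderEmbedding K L M).lt_iff_lt.mpr h)

lemma LieSubmodule.finrank_mono {K L M : Type*} [Field K] [LieRing L]
    [AddCommGroup M] [Module K M] [LieRingModule L M] [FiniteDimensional K M]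
    {N₁ N₂ : LieSubmodule K L M} (h : N₁ ≤ N₂) : finrank K N₁ ≤ finrank K N₂ :=
  Submodule.finrank_mono ((LieSubmodule.toSubmodule_orderEmbedding K L M).le_iff_le.mpr h)

namespace LieModule

section

variable {R L M : Type*} [CommRing R] [LieRing L] [LieAlgebra R L]
  [AddCommGroup M] [Module R M] [LieRingModule L M]

lemma lowerCentralSeries_one_eq_top_lie :
    lowerCentralSeries R L M 1 = ⁅(⊤ : LieIdeal R L), (⊤ : LieSubmodule R L M)⁆ := by
  rw [lowerCentralSeries_succ, lowerCentralSeries_zero]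

variable [LieModule R L M]

lemma lowerCentralSeries_eq_bot_of_succ_eq [IsNilpotent L M] {k : ℕ}
    (h : lowerCentralSeries R L M (k + 1) = lowerCentralSeries R L M k) :
    lowerCentralSeries R L M k = ⊥ := by
  obtain ⟨N, hN⟩ := IsNilpotent.nilpotent R L M
  have hconst : ∀ j, lowerCentralSeries R L M (k + j) = lowerCentralSeries R L M k := by
    intro j
    induction j with
    | zero => rfl
    | succ j ih => rw [← add_assoc, lowerCentralSeries_succ, ih, ← lowerCentralSeries_succ, h]
  rw [← hconst N, ← le_bot_iff, ← hN]
  exact antitone_lowerCentralSeries R L M (Nat.le_add_left N k)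

lemma lowerCentralSeries_le_maxTrivSubmodule_of_succ_eq_bot {k : ℕ}
    (h : lowerCentralSeries R L M (k + 1) = ⊥) :
    lowerCentralSeries R L M k ≤ maxTrivSubmodule R L M := by
  rwa [le_max_triv_iff_bracket_eq_bot, ← lowerCentralSeries_succ]

lemma lowerCentralSeries_succ_sup_lt_s16 [IsNilpotent L M] {T : LieSubmodule R L M}
    (hT : T ≤ maxTrivSubmodule R L M) {k : ℕ} (hk : lowerCentralSeries R L M (k + 1) ≠ ⊥) :
    lowerCentralSeries R L M (k + 1) ⊔ T < lowerCentralSeries R L M k ⊔ T := by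
  refine lt_of_le_of_ne (sup_le_sup_right (antitone_lowerCentralSeries R L M k.le_succ) T) ?_
  intro heq
  have hT : ⁅(⊤ : LieIdeal R L), T⁆ = ⊥ := (le_max_triv_iff_bracket_eq_bot R L M).mp hT
  refine hk (lowerCentralSeries_eq_bot_of_succ_eq ?_)
  calc lowerCentralSeries R L M (k + 1 + 1)
      = ⁅(⊤ : LieIdeal R L), lowerCentralSeries R L M (k + 1) ⊔ T⁆ := by
        rw [LieSubmodule.lie_sup, hT, sup_bot_eq, lowerCentralSeries_succ]
    _ = lowerCentralSeries R L M (k + 1) := by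
        rw [heq, LieSubmodule.lie_sup, hT, sup_bot_eq, lowerCentralSeries_succ]

end

section

variable {F L M : Type*} [Field F] [LieRing L] [LieAlgebra F L]
  [AddCommGroup M] [Module F M] [LieRingModule L M] [LieModule F L M] [FiniteDimensional F M]
  [IsNilpotent L M]

lemma finrank_lowerCentralSeries_sup_add_le {T : LieSubmodule F L M}
    (hT : T ≤ maxTrivSubmodule F L M) (i : ℕ) {j : ℕ}
    (h : lowerCentralSeries F L M (i + j) ≠ ⊥) :
    finrank F ↥(lowerCentralSeries F L M (i + j) ⊔ T) + j
      ≤ finrank F ↥(lowerCentralSeries F L M i ⊔ T) := by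
  induction j with
  | zero => rfl
  | succ j ih =>
    have hj : lowerCentralSeries F L M (i + j) ≠ ⊥ := fun hbot =>
      h (eq_bot_iff.mpr (hbot ▸ antitone_lowerCentralSeries F L M (by omega)))
    rw [← add_assoc i j 1] at h ⊢
    have hlt := LieSubmodule.finrank_lt_finrank_of_lt (lowerCentralSeries_succ_sup_lt_s16 hT h)
    have := ih hj
    omega

end

end LieModule

namespace LieAlgebra

variable {F L : Type*} [Field F] [LieRing L] [LieAlgebra F L]

open LieModule Submodule

lemma lowerCentralSeries_one_le_top_lie_of_finrank_le [FiniteDimensional F L] {K : LieIdeal F L}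
    (h : finrank F L ≤ finrank F K + 1) :
    lowerCentralSeries F L L 1 ≤ ⁅(⊤ : LieIdeal F L), K⁆ := by
  obtain ⟨w, hw⟩ := exists_sup_span_singleton_eq_top (W := K.toSubmodule) h
  have hdecomp : ∀ x : L, ∃ k ∈ K, ∃ c : F, k + c • w = x := by
    intro x
    obtain ⟨k, hk, y, hy, rfl⟩ := mem_sup.mp (hw ▸ mem_top : x ∈ K.toSubmodule ⊔ span F {w})
    obtain ⟨c, rfl⟩ := mem_span_singleton.mp hy
    exact ⟨k, hk, c, rfl⟩
  have hlie_w : ∀ x : L, ⁅x, w⁆ ∈ ⁅(⊤ : LieIdeal F L), K⁆ := by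
    intro x
    obtain ⟨k, hk, c, rfl⟩ := hdecomp x
    rw [add_lie, smul_lie, lie_self, smul_zero, add_zero, ← lie_skew]
    exact neg_mem (LieSubmodule.lie_mem_lie (LieSubmodule.mem_top w) hk)
  rw [lowerCentralSeries_one_eq_top_lie, LieSubmodule.lie_le_iff]
  rintro x - y -
  obtain ⟨k, hk, c, rfl⟩ := hdecomp y
  rw [lie_add, lie_smul]
  exact add_mem (LieSubmodule.lie_mem_lie (LieSubmodule.mem_top x) hk) (smul_mem _ c (hlie_w x))

lemma mem_secondCenter_iff_mem_normalizer_center {x : L} :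
    x ∈ secondCenter F L ↔ x ∈ LieSubmodule.normalizer (center F L) := by
  change (∀ y, ⁅x, y⁆ ∈ center F L) ↔ ∀ y, ⁅y, x⁆ ∈ center F L
  refine forall_congr' fun y => ?_
  rw [← lie_skew, neg_mem_iff]

lemma finrank_secondCenter :
    finrank F (secondCenter F L) = finrank F (LieSubmodule.normalizer (center F L)) :=
  (LinearEquiv.ofEq _ _
    (Submodule.ext fun _ => mem_secondCenter_iff_mem_normalizer_center)).finrank_eq

lemma lowerCentralSeries_one_sup_center_le_ker_ad {u : L} (hu : u ∈ secondCenter F L) :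
    (lowerCentralSeries F L L 1 ⊔ center F L).toSubmodule ≤ LinearMap.ker (ad F L u) := by
  have hcomm : ∀ z ∈ center F L, ∀ y : L, ⁅z, y⁆ = 0 := fun z hz y => by
    rw [← lie_skew, (mem_maxTrivSubmodule F L L z).mp hz y, neg_zero]
  rw [LieSubmodule.sup_toSubmodule, lowerCentralSeries_one_eq_top_lie,
    LieSubmodule.lieIdeal_oper_eq_linear_span']
  refine sup_le (span_le.mpr ?_) fun z hz => (mem_maxTrivSubmodule F L L z).mp hz u
  rintro _ ⟨x, -, y, -, rfl⟩
  rw [SetLike.mem_coe, LinearMap.mem_ker, ad_apply, leibniz_lie, hcomm _ (hu x),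
    ← lie_skew x, hcomm _ (hu y), neg_zero, add_zero]

lemma finrank_sup_span_sup_span_of_le_ker_ad [FiniteDimensional F L] {a b : L}
    (hab : ⁅a, b⁆ ≠ 0) {P : Submodule F L} (ha : P ≤ LinearMap.ker (ad F L a))
    (hb : P ≤ LinearMap.ker (ad F L b)) :
    finrank F ↥(P ⊔ span F {a} ⊔ span F {b}) = finrank F P + 2 := by
  have ha' : a ∉ P := fun h =>
    hab (by rw [← lie_skew, ← ad_apply F, LinearMap.mem_ker.mp (hb h), neg_zero])
  have hb' : b ∉ P ⊔ span F {a} := by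
    have : P ⊔ span F {a} ≤ LinearMap.ker (ad F L a) :=
      sup_le ha (span_le.mpr (by simp))
    exact fun h => hab (this h)
  rw [finrank_sup_span_singleton hb', finrank_sup_span_singleton ha']

variable [FiniteDimensional F L]

lemma finrank_lowerCentralSeries_one_sup_normalizer_center_add_two_le [IsNilpotent L L]
    (h : lowerCentralSeries F L L 2 ≠ ⊥) :
    finrank F ↥(lowerCentralSeries F L L 1 ⊔ LieSubmodule.normalizer (center F L)) + 2
      ≤ finrank F L := by
  set K := lowerCentralSeries F L L 1 ⊔ LieSubmodule.normalizer (center F L)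
  by_contra! hlt
  have hbracket : ⁅(⊤ : LieIdeal F L), K⁆ ≤ lowerCentralSeries F L L 2 ⊔ center F L := by
    rw [LieSubmodule.lie_sup, ← lowerCentralSeries_succ]
    exact sup_le_sup_left ((LieSubmodule.top_lie_le_iff_le_normalizer _ _).mpr le_rfl) _
  have hle := (lowerCentralSeries_one_le_top_lie_of_finrank_le (K := K) (by omega)).trans hbracket
  exact (lowerCentralSeries_succ_sup_lt_s16 le_rfl h).not_ge (sup_le hle le_sup_right)

lemma finrank_lowerCentralSeries_one_sup_center_add_four_le [IsNilpotent L L]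
    (h : lowerCentralSeries F L L 2 ≠ ⊥) {a b : L} (ha : a ∈ secondCenter F L)
    (hb : b ∈ secondCenter F L) (hab : ⁅a, b⁆ ≠ 0) :
    finrank F ↥(lowerCentralSeries F L L 1 ⊔ center F L) + 4 ≤ finrank F L := by
  have hle : (lowerCentralSeries F L L 1 ⊔ center F L).toSubmodule ⊔ span F {a} ⊔ span F {b}
      ≤ (lowerCentralSeries F L L 1 ⊔ LieSubmodule.normalizer (center F L)).toSubmodule := by
    refine sup_le (sup_le ?_ ?_) ?_
    · exact sup_le_sup_left (LieSubmodule.le_normalizer _) _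
    all_goals
      exact (span_singleton_le_iff_mem _ _).mpr
        (LieSubmodule.mem_sup_right (mem_secondCenter_iff_mem_normalizer_center.mp ‹_›))
  calc finrank F ↥(lowerCentralSeries F L L 1 ⊔ center F L) + 4
      = finrank F ↥((lowerCentralSeries F L L 1 ⊔ center F L).toSubmodule ⊔ span F {a}
          ⊔ span F {b}) + 2 := by
        rw [finrank_sup_span_sup_span_of_le_ker_ad hab
          (lowerCentralSeries_one_sup_center_le_ker_ad ha)
          (lowerCentralSeries_one_sup_center_le_ker_ad hb)]
        rfl
    _ ≤ finrank F ↥(lowerCentralSeries F L L 1 ⊔ LieSubmodule.normalizer (center F L)) + 2 :=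
        Nat.add_le_add_right (finrank_mono hle) 2
    _ ≤ finrank F L := finrank_lowerCentralSeries_one_sup_normalizer_center_add_two_le h

lemma finrank_lowerCentralSeries_add_two_le_finrank_secondCenter {k : ℕ} (hk : 1 ≤ k)
    (hcen : lowerCentralSeries F L L (k + 1) ≤ center F L) {a b : L}
    (ha : a ∈ secondCenter F L) (hb : b ∈ secondCenter F L) (hab : ⁅a, b⁆ ≠ 0) :
    finrank F ↥(lowerCentralSeries F L L k) + 2 ≤ finrank F ↥(secondCenter F L) := by
  have hP : (lowerCentralSeries F L L k).toSubmodule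
      ≤ (lowerCentralSeries F L L 1 ⊔ center F L).toSubmodule :=
    le_sup_left.trans' (antitone_lowerCentralSeries F L L hk)
  have hle : (lowerCentralSeries F L L k).toSubmodule ⊔ span F {a} ⊔ span F {b}
      ≤ (LieSubmodule.normalizer (center F L)).toSubmodule := by
    refine sup_le (sup_le ?_ ?_) ?_
    · rw [LieSubmodule.toSubmodule_le_toSubmodule, ← LieSubmodule.top_lie_le_iff_le_normalizer,
        ← lowerCentralSeries_succ]
      exact hcen
    all_goals
      exact (span_singleton_le_iff_mem _ _).mpr (mem_secondCenter_iff_mem_normalizer_center.mp ‹_›)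
  calc finrank F ↥(lowerCentralSeries F L L k) + 2
      = finrank F ↥((lowerCentralSeries F L L k).toSubmodule ⊔ span F {a} ⊔ span F {b}) :=
        (finrank_sup_span_sup_span_of_le_ker_ad hab
          (hP.trans (lowerCentralSeries_one_sup_center_le_ker_ad ha))
          (hP.trans (lowerCentralSeries_one_sup_center_le_ker_ad hb))).symm
    _ ≤ finrank F ↥(LieSubmodule.normalizer (center F L)) := finrank_mono hle
    _ = finrank F ↥(secondCenter F L) := finrank_secondCenter.symm

end LieAlgebra

open LieModule LieAlgebra

theorem second_center_abelian_of_coclass_three_general {F L : Type*} [Field F] [LieRing L]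
    [LieAlgebra F L] [FiniteDimensional F L]
    (n : ℕ) (hn : Module.finrank F L = n) (hn6 : 6 ≤ n)
    (hclass : LieModule.lowerCentralSeries F L L (n - 3) = ⊥)
    (hclass' : LieModule.lowerCentralSeries F L L (n - 4) ≠ ⊥)
    (hyp :
      Module.finrank F ↥(LieAlgebra.center F L) ≠ 1 ∨
      (Module.finrank F ↥(LieAlgebra.center F L) = 1 ∧
        2 ≤ Module.finrank F ↥(secondCenter F L) ∧
        Module.finrank F ↥(secondCenter F L) ≤ 3) ∨
      (Module.finrank F ↥(LieAlgebra.center F L) = 1 ∧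
        Module.finrank F ↥(secondCenter F L) = 4 ∧
        n - 3 ≤ Module.finrank F ↥(LieModule.lowerCentralSeries F L L 1) ∧
        Module.finrank F ↥(LieModule.lowerCentralSeries F L L 1) ≤ n - 2)) :
    ∀ a ∈ secondCenter F L, ∀ b ∈ secondCenter F L, ⁅a, b⁆ = 0 := by
  intro a ha b hb
  by_contra hab
  have : IsNilpotent L L := LieModule.IsNilpotent.mk L hclass
  have hlast : lowerCentralSeries F L L (n - 4) ≤ center F L :=
    lowerCentralSeries_le_maxTrivSubmodule_of_succ_eq_bot
      (by rwa [show n - 4 + 1 = n - 3 by omega])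
  have hlast_pos : 0 < finrank F (lowerCentralSeries F L L (n - 4)) :=
    Nat.pos_of_ne_zero fun h =>
      hclass' ((LieSubmodule.toSubmodule_eq_bot _).mp (Submodule.finrank_eq_zero.mp h))
  have hbound : finrank F ↥(lowerCentralSeries F L L 1 ⊔ center F L) + 4 ≤ n :=
    hn ▸ finrank_lowerCentralSeries_one_sup_center_add_four_le
      (fun h => hclass' (eq_bot_iff.mpr (h ▸ antitone_lowerCentralSeries F L L (by omega))))
      ha hb hab
  rcases hyp with hZ | ⟨-, -, hZ₂⟩ | ⟨-, -, hL', -⟩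
  · have hdesc := finrank_lowerCentralSeries_sup_add_le (T := center F L) le_rfl 1 (j := n - 5)
      (by rwa [show 1 + (n - 5) = n - 4 by omega])
    rw [show 1 + (n - 5) = n - 4 by omega, sup_eq_right.mpr hlast] at hdesc
    have := LieSubmodule.finrank_mono hlast
    omega
  · have hdesc := finrank_lowerCentralSeries_sup_add_le (T := ⊥) bot_le (n - 5) (j := 1)
      (by rwa [show n - 5 + 1 = n - 4 by omega])
    rw [show n - 5 + 1 = n - 4 by omega, sup_bot_eq, sup_bot_eq] at hdesc
    have := finrank_lowerCentralSeries_add_two_le_finrank_secondCenter (k := n - 5) (by omega)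
      (by rwa [show n - 5 + 1 = n - 4 by omega]) ha hb hab
    omega
  · have := LieSubmodule.finrank_mono
      (le_sup_left (a := lowerCentralSeries F L L 1) (b := center F L))
    omega

/-- Let `L` be an `n`-dimensional nilpotent Lie algebra of coclass `3` (i.e. of nilpotency class
`n − 3`) over a field `𝔽` of characteristic different from `2`, with `n ≥ 6`. If one of the
following holds: (i) `dim Z(L) ≠ 1`; (ii) `dim Z(L) = 1` and `2 ≤ dim Z₂(L) ≤ 3`;
(iii) `dim Z(L) = 1`, `dim Z₂(L) = 4` and `n − 3 ≤ dim L' ≤ n − 2`; then `Z₂(L)` is abelian,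
i.e. `⁅a, b⁆ = 0` for all `a, b ∈ Z₂(L)`. -/
theorem second_center_abelian_of_coclass_three {F L : Type*} [Field F] [LieRing L]
    [LieAlgebra F L] [FiniteDimensional F L] (hchar : ringChar F ≠ 2)
    (n : ℕ) (hn : Module.finrank F L = n) (hn6 : 6 ≤ n)
    (hclass : LieModule.lowerCentralSeries F L L (n - 3) = ⊥)
    (hclass' : LieModule.lowerCentralSeries F L L (n - 4) ≠ ⊥)
    (hyp :
      Module.finrank F ↥(LieAlgebra.center F L) ≠ 1 ∨
      (Module.finrank F ↥(LieAlgebra.center F L) = 1 ∧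
        2 ≤ Module.finrank F ↥(secondCenter F L) ∧
        Module.finrank F ↥(secondCenter F L) ≤ 3) ∨
      (Module.finrank F ↥(LieAlgebra.center F L) = 1 ∧
        Module.finrank F ↥(secondCenter F L) = 4 ∧
        n - 3 ≤ Module.finrank F ↥(LieModule.lowerCentralSeries F L L 1) ∧
        Module.finrank F ↥(LieModule.lowerCentralSeries F L L 1) ≤ n - 2)) :
    ∀ a ∈ secondCenter F L, ∀ b ∈ secondCenter F L, ⁅a, b⁆ = 0 :=
  second_center_abelian_of_coclass_three_general n hn hn6 hclass hclass' hyp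
end
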